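/- arXiv:1512.04320 — 8 statements merged into one kernel-verified Lean document; each statement's English description precedes it below -/
import Mathlib

section
/- Let n ≥ 1 and let κ be an n-core partition. If a cell in the first row of κ has hook length h with h + n also a hook length in the same column (of the first-row cell's column), then for every z ≥ 0, if z + n is a hook length of a cell in a given column of κ, then z is also a hook length of a cell in that column. -/
/-- A partition, given by its weakly decreasing sequence of parts (0-indexed,
eventually zero), identified with its Young diagram. -/
structure YPartition where
  parts : ℕ → ℕ
  antitone : ∀ ⦃i j : ℕ⦄, i ≤ j → parts j ≤ parts i
  exists_zero : ∃ N, parts N = 0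

namespace YPartition

/-- The conjugate partition: `conj κ j = #{i : κ.parts i > j}` (0-indexed). -/
noncomputable def conj (κ : YPartition) (j : ℕ) : ℕ := Set.ncard {i : ℕ | j < κ.parts i}

/-- `(i, j)` (0-indexed) is a cell of the Young diagram of `κ`. -/
def IsCell (κ : YPartition) (i j : ℕ) : Prop := j < κ.parts i

/-- The hook length of the (0-indexed) cell `(i,j)`:
in 1-indexed terms `h(i,j) = λ_i − j + λ'_j − i + 1`. -/
noncomputable def hook (κ : YPartition) (i j : ℕ) : ℕ :=
  κ.parts i + κ.conj j - i - j - 1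

/-- `κ` is an `n`-core: no cell has hook length `n`. -/
def IsCore (n : ℕ) (κ : YPartition) : Prop := ∀ i j, κ.IsCell i j → κ.hook i j ≠ n

/-- The set of hook lengths of the cells in column `j` of `κ`. -/
noncomputable def colHooks (κ : YPartition) (j : ℕ) : Set ℕ :=
  {h | ∃ i, κ.IsCell i j ∧ κ.hook i j = h}

/-- The set of hook lengths of the cells in row `i` of `κ`. -/
noncomputable def rowHooks (κ : YPartition) (i : ℕ) : Set ℕ :=
  {h | ∃ j, κ.IsCell i j ∧ κ.hook i j = h}

/-- Row `i` is an `n`-row: it is a nonempty row whose leftmost cell has hook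
length `h` with `h + n` not a hook length of a cell of the first column. -/
noncomputable def IsNRow (κ : YPartition) (n i : ℕ) : Prop :=
  κ.IsCell i 0 ∧ κ.hook i 0 + n ∉ κ.colHooks 0

/-- Column `j` is an `n`-column: it is a nonempty column whose top cell has hook
length `h` with `h + n` not a hook length of a cell of the first row. -/
noncomputable def IsNCol (κ : YPartition) (n j : ℕ) : Prop :=
  κ.IsCell 0 j ∧ κ.hook 0 j + n ∉ κ.rowHooks 0

end YPartition

lemma lowerSet_mem_iff (S : Set ℕ) (n : ℕ) (hsub : S ⊆ Set.Iio n)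
    (hlow : ∀ a b : ℕ, a ≤ b → b ∈ S → a ∈ S) (k : ℕ) : k ∈ S ↔ k < S.ncard := by
  have hfin : S.Finite := (Set.finite_Iio n).subset hsub
  constructor
  · intro hk
    have h1 : Set.Iic k ⊆ S := fun a ha => hlow a k ha hk
    have h2 := Set.ncard_le_ncard h1 hfin
    rw [← Finset.coe_Iic, Set.ncard_coe_finset, Nat.card_Iic] at h2
    omega
  · intro hk
    by_contra hks
    have h2 : S ⊆ Set.Iio k := by
      intro b hb
      simp only [Set.mem_Iio]
      by_contra hbk
      push_neg at hbk
      exact hks (hlow k b hbk hb)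
    have h3 := Set.ncard_le_ncard h2 (Set.finite_Iio k)
    rw [← Finset.coe_Iio, Set.ncard_coe_finset, Nat.card_Iio] at h3
    omega

namespace YPartition

variable (κ : YPartition)

lemma conj_iff (j : ℕ) : ∀ i, i < κ.conj j ↔ j < κ.parts i := by
  obtain ⟨N, hN⟩ := κ.exists_zero
  intro i
  have h := lowerSet_mem_iff {i : ℕ | j < κ.parts i} N ?_ ?_ i
  · exact (h.symm.trans Iff.rfl)
  · intro a ha
    simp only [Set.mem_setOf_eq] at ha
    simp only [Set.mem_Iio]
    by_contra hb
    push_neg at hb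
    have := κ.antitone hb
    omega
  · intro a b hab hb
    exact lt_of_lt_of_le hb (κ.antitone hab)

lemma hook_add {i j : ℕ} (h : κ.IsCell i j) :
    κ.hook i j + (i + j + 1) = κ.parts i + κ.conj j := by
  have h1 : j < κ.parts i := h
  have h2 : i < κ.conj j := (κ.conj_iff j i).mpr h1
  unfold hook
  omega

/-- hook of cell not in diagram's column-0 region is 0. -/
lemma hook_zero_of_ge {k : ℕ} (hk : κ.conj 0 ≤ k) : κ.hook k 0 = 0 := by
  have h1 : ¬ (0 < κ.parts k) := by
    intro h
    have := (κ.conj_iff 0 k).mpr h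
    omega
  unfold hook
  omega

/-- Strict decrease of first-column hooks. -/
lemma beta_strict {a b : ℕ} (hab : a ≤ b) (hb : b < κ.conj 0) :
    κ.hook b 0 + (b - a) ≤ κ.hook a 0 := by
  have ha : a < κ.conj 0 := lt_of_le_of_lt (by omega) hb
  have hpa : 0 < κ.parts a := (κ.conj_iff 0 a).mp ha
  have hpb : 0 < κ.parts b := (κ.conj_iff 0 b).mp hb
  have e1 := κ.hook_add (i := a) (j := 0) hpa
  have e2 := κ.hook_add (i := b) (j := 0) hpb
  have := κ.antitone hab
  omega

/-- Key combinatorial lemma: if `m < hook i 0` and `m` is not a first-column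
hook, then `hook i 0 - m` is a hook in row `i`. -/
lemma rowHook {i m : ℕ} (hcell : κ.IsCell i 0) (hm : m < κ.hook i 0)
    (hnot : ∀ k, κ.IsCell k 0 → κ.hook k 0 ≠ m) :
    ∃ j, κ.IsCell i j ∧ κ.hook i j + m = κ.hook i 0 := by
  set c0 := κ.conj 0 with hc0
  set S : Set ℕ := {k | m < κ.hook k 0} with hS
  have hsub : S ⊆ Set.Iio c0 := by
    intro k hk
    simp only [hS, Set.mem_setOf_eq] at hk
    simp only [Set.mem_Iio]
    by_contra hc
    push_neg at hc
    have := κ.hook_zero_of_ge hc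
    omega
  have hlow : ∀ a b : ℕ, a ≤ b → b ∈ S → a ∈ S := by
    intro a b hab hb
    simp only [hS, Set.mem_setOf_eq] at *
    have hbc : b < c0 := hsub hb
    have := κ.beta_strict hab hbc
    omega
  set s := S.ncard with hs
  have hmem : ∀ k, k ∈ S ↔ k < s := by
    obtain ⟨N, hN⟩ := κ.exists_zero
    intro k
    refine lowerSet_mem_iff S (max c0 N) ?_ hlow k
    intro x hx
    have := hsub hx
    simp only [Set.mem_Iio] at *
    omega
  have hiS : i ∈ S := hm
  have his : i < s := (hmem i).mp hiS
  have hsc0 : s ≤ c0 := by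
    by_contra hc
    push_neg at hc
    have := hsub ((hmem c0).mpr hc)
    simp at this
  -- t := c0 - s ≤ m via injectivity of hooks on [s, c0)
  have htm : c0 - s ≤ m := by
    have hinj : Set.InjOn (fun k => κ.hook k 0) ↑(Finset.Ico s c0) := by
      intro a ha b hb hab
      simp only [Finset.coe_Ico, Set.mem_Ico] at ha hb
      by_contra hne
      rcases Nat.lt_or_ge a b with h | h
      · have := κ.beta_strict (le_of_lt h) hb.2
        simp only at hab
        omega
      · have h' : b < a := by omega
        have := κ.beta_strict (le_of_lt h') ha.2
        simp only at hab
        omega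
    have hmap : ∀ k ∈ Finset.Ico s c0, κ.hook k 0 ∈ Finset.Ico 1 m := by
      intro k hk
      simp only [Finset.mem_Ico] at hk ⊢
      have hkc : k < c0 := hk.2
      have hpk : 0 < κ.parts k := (κ.conj_iff 0 k).mp hkc
      have e := κ.hook_add (i := k) (j := 0) hpk
      have h1 : ¬ (m < κ.hook k 0) := fun hc => by
        have := (hmem k).mp hc; omega
      have h2 : κ.hook k 0 ≠ m := hnot k hpk
      omega
    have := Finset.card_le_card_of_injOn (fun k => κ.hook k 0) hmap hinj
    simp [Nat.card_Ico] at this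
    omega
  set j := m - (c0 - s) with hj
  -- key pointwise claim
  have hclaim : ∀ k, j < κ.parts k ↔ k < s := by
    intro k
    constructor
    · intro hpk
      have hpk1 : 0 < κ.parts k := by omega
      have hkc : k < c0 := (κ.conj_iff 0 k).mpr hpk1
      by_contra hks
      push_neg at hks
      have hsk : s ≤ k := hks
      have hsc : s < c0 := by omega
      have hps : 0 < κ.parts s := (κ.conj_iff 0 s).mp hsc
      have hbs : ¬ (m < κ.hook s 0) := fun hc => by
        have := (hmem s).mp hc; omega
      have hbsne : κ.hook s 0 ≠ m := hnot s hps
      have hdec := κ.beta_strict hsk hkc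
      have e := κ.hook_add (i := k) (j := 0) hpk1
      omega
    · intro hks
      have hs1 : s - 1 ∈ S := (hmem (s - 1)).mpr (by omega)
      simp only [hS, Set.mem_setOf_eq] at hs1
      have hs1c : s - 1 < c0 := by omega
      have hdec := κ.beta_strict (a := k) (b := s - 1) (by omega) hs1c
      have hkc : k < c0 := by omega
      have hpk : 0 < κ.parts k := (κ.conj_iff 0 k).mp hkc
      have e := κ.hook_add (i := k) (j := 0) hpk
      omega
  have hconj : κ.conj j = s := by
    have h1 := (κ.conj_iff j (κ.conj j))
    have h2 := (κ.conj_iff j s)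
    have h3 := hclaim (κ.conj j)
    have h4 := hclaim s
    omega
  have hcell' : κ.IsCell i j := (hclaim i).mpr his
  refine ⟨j, hcell', ?_⟩
  have e1 := κ.hook_add hcell'
  have hpi : 0 < κ.parts i := hcell
  have e2 := κ.hook_add (i := i) (j := 0) hpi
  omega

/-- In an `n`-core, the first-column hook set is closed under subtracting `n`. -/
lemma betaClosed {n : ℕ} (hn : 1 ≤ n) (hκ : YPartition.IsCore n κ) {i : ℕ}
    (hcell : κ.IsCell i 0) (hni : n ≤ κ.hook i 0) :
    ∃ k, κ.IsCell k 0 ∧ κ.hook k 0 + n = κ.hook i 0 := by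
  by_cases h : ∃ k, κ.IsCell k 0 ∧ κ.hook k 0 = κ.hook i 0 - n
  · obtain ⟨k, hk1, hk2⟩ := h
    exact ⟨k, hk1, by omega⟩
  · push_neg at h
    exfalso
    obtain ⟨j, hc, he⟩ := κ.rowHook hcell (m := κ.hook i 0 - n) (by omega) h
    exact hκ i j hc (by omega)

end YPartition

/-- Let `n ≥ 1` and `κ` an `n`-core. For any column of `κ` and any `z ≥ 0`:
if `z + n` is a hook length of a cell in that column, then so is `z`. -/
theorem stmt0 (n : ℕ) (hn : 1 ≤ n) (κ : YPartition) (hκ : YPartition.IsCore n κ)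
    (j z : ℕ) (hz : z + n ∈ κ.colHooks j) : z ∈ κ.colHooks j := by
  obtain ⟨i, hcell, hh⟩ := hz
  have hpi : 0 < κ.parts i := lt_of_le_of_lt (Nat.zero_le j) hcell
  have hz1 : 1 ≤ z := by
    by_contra hc
    push_neg at hc
    have hz0 : z = 0 := by omega
    exact hκ i j hcell (by omega)
  have hcj : κ.conj j ≤ κ.conj 0 := by
    by_contra hc
    push_neg at hc
    have h1 := (κ.conj_iff j (κ.conj 0)).mp hc
    have h2 := (κ.conj_iff 0 (κ.conj 0)).mpr (by omega)
    omega
  have hicj : i < κ.conj j := (κ.conj_iff j i).mpr hcell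
  have e1 := κ.hook_add hcell
  have e2 := κ.hook_add (i := i) (j := 0) hpi
  have hni : n ≤ κ.hook i 0 := by omega
  obtain ⟨k, hk0, hbeta⟩ := κ.betaClosed hn hκ hpi hni
  have hkc0 : k < κ.conj 0 := (κ.conj_iff 0 k).mpr hk0
  have ek := κ.hook_add (i := k) (j := 0) hk0
  have hkcj : k < κ.conj j := by
    by_contra hc
    push_neg at hc
    have hpk : ¬ (j < κ.parts k) := fun hcc => by
      have := (κ.conj_iff j k).mpr hcc
      omega
    omega
  have hcellkj : κ.IsCell k j := (κ.conj_iff j k).mp hkcj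
  refine ⟨k, hcellkj, ?_⟩
  have ekj := κ.hook_add hcellkj
  omega
end

section
/- The map β sending an n-core κ (with maximal hook length m) to H^c(m) ∪ {z ∈ ℤ : z < 0} is a bijection between the set of n-cores and the set of normalised n-flush abaci. -/
/-- An abacus: a subset of ℤ containing all sufficiently small integers and
no sufficiently large integers. -/
def IsAbacus (A : Set ℤ) : Prop :=
  ∃ a b : ℤ, (∀ z < a, z ∈ A) ∧ ∀ z > b, z ∉ A

/-- A normalised abacus:  is a gap and there are no negative gaps. -/
def Normalised (A : Set ℤ) : Prop := (0 : ℤ) ∉ A ∧ ∀ z < (0 : ℤ), z ∈ A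

/-- An -flush abacus:  implies . -/
def IsFlush (n : ℕ) (A : Set ℤ) : Prop := ∀ z ∈ A, z - (n : ℤ) ∈ A

/-- The map : an -core  is sent to , where 
is the set of hook lengths of the first column of . -/
noncomputable def betaMap (κ : YPartition) : Set ℤ :=
  {z : ℤ | z < 0 ∨ ∃ i, κ.IsCell i 0 ∧ (κ.hook i 0 : ℤ) = z}

namespace YPartition

lemma lt_conj_iff (κ : YPartition) (i j : ℕ) : i < κ.conj j ↔ j < κ.parts i := by
  obtain ⟨N, hN⟩ := κ.exists_zero
  have hex : ∃ k, κ.parts k ≤ j := ⟨N, by omega⟩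
  have hiff : ∀ k, j < κ.parts k ↔ k < Nat.find hex := by
    intro k
    constructor
    · intro hk
      by_contra h
      push_neg at h
      have h1 : κ.parts k ≤ κ.parts (Nat.find hex) := κ.antitone h
      have h2 := Nat.find_spec hex
      omega
    · intro hk
      have := Nat.find_min hex hk
      omega
  have hset : {i : ℕ | j < κ.parts i} = Set.Iio (Nat.find hex) := by
    ext k; simpa using hiff k
  rw [conj, hset, show Set.Iio (Nat.find hex) = ↑(Finset.Iio (Nat.find hex)) from
    (Finset.coe_Iio _).symm, Set.ncard_coe_finset, Nat.card_Iio]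
  exact (hiff i).symm

lemma conj_anti (κ : YPartition) : Antitone κ.conj := by
  intro j j' h
  by_contra hc; push_neg at hc
  have h1 := (κ.lt_conj_iff (κ.conj j) j').1 hc
  have h2 : ¬ j < κ.parts (κ.conj j) := fun hh => lt_irrefl _ ((κ.lt_conj_iff _ _).2 hh)
  omega

/-- The beta-numbers of a partition. -/
noncomputable def bseq (κ : YPartition) (i : ℕ) : ℤ := (κ.parts i : ℤ) + κ.conj 0 - 1 - i

lemma bseq_strictAnti (κ : YPartition) : StrictAnti κ.bseq := by
  apply strictAnti_nat_of_succ_lt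
  intro i
  have := κ.antitone (Nat.le_succ i)
  simp only [bseq, Nat.succ_eq_add_one] at *
  push_cast
  omega

lemma hook_cast (κ : YPartition) {i j : ℕ} (hcell : κ.IsCell i j) :
    (κ.hook i j : ℤ) = (κ.parts i : ℤ) + κ.conj j - i - j - 1 := by
  have h1 : j + 1 ≤ κ.parts i := hcell
  have h2 : i + 1 ≤ κ.conj j := (κ.lt_conj_iff i j).2 hcell
  simp only [hook]
  omega

lemma mem_betaMap (κ : YPartition) (z : ℤ) : z ∈ betaMap κ ↔ ∃ i, κ.bseq i = z := by
  constructor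
  · rintro (hz | ⟨i, hcell, hh⟩)
    · refine ⟨((κ.conj 0 : ℤ) - 1 - z).toNat, ?_⟩
      have hL : (κ.conj 0 : ℤ) ≤ ((κ.conj 0 : ℤ) - 1 - z).toNat := by omega
      have hp : κ.parts (((κ.conj 0 : ℤ) - 1 - z).toNat) = 0 := by
        by_contra h
        have := (κ.lt_conj_iff (((κ.conj 0 : ℤ) - 1 - z).toNat) 0).2 (by omega)
        omega
      simp only [bseq, hp]
      push_cast
      omega
    · refine ⟨i, ?_⟩
      rw [bseq, ← hh, κ.hook_cast hcell]
      push_cast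
      omega
  · rintro ⟨i, rfl⟩
    rcases Nat.eq_zero_or_pos (κ.parts i) with hp | hp
    · left
      have : ¬ i < κ.conj 0 := fun h => by have := (κ.lt_conj_iff i 0).1 h; omega
      simp only [bseq, hp]
      push_cast
      omega
    · right
      have hcell : κ.IsCell i 0 := hp
      refine ⟨i, hcell, ?_⟩
      rw [κ.hook_cast hcell, bseq]
      push_cast
      ring

lemma bseq_ne_zero (κ : YPartition) (i : ℕ) : κ.bseq i ≠ 0 := by
  rcases Nat.eq_zero_or_pos (κ.parts i) with hp | hp
  · have : ¬ i < κ.conj 0 := fun h => by have := (κ.lt_conj_iff i 0).1 h; omega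
    simp only [bseq, hp]; push_cast; omega
  · have h2 := (κ.lt_conj_iff i 0).2 hp
    simp only [bseq]; push_cast; omega

/-- Values of the "gap" function are not beta-numbers. -/
lemma g_not_bseq (κ : YPartition) (j k : ℕ) :
    κ.bseq k ≠ (κ.conj 0 : ℤ) + j - κ.conj j := by
  intro hk
  simp only [bseq] at hk
  rcases Nat.lt_or_ge j (κ.parts k) with h | h
  · have := (κ.lt_conj_iff k j).2 h
    omega
  · have : ¬ k < κ.conj j := fun hh => by have := (κ.lt_conj_iff k j).1 hh; omega
    omega

end YPartition

namespace YPartition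

lemma row_hook_iff (κ : YPartition) {n i : ℕ} (hn : 1 ≤ n) (hi : 0 < κ.parts i) :
    (∃ j, κ.IsCell i j ∧ κ.hook i j = n) ↔
      ((n : ℤ) ≤ κ.bseq i ∧ (κ.bseq i - n) ∉ betaMap κ) := by
  set L : ℤ := (κ.conj 0 : ℤ) with hL
  constructor
  · rintro ⟨j, hcell, hh⟩
    have hc := κ.hook_cast hcell
    rw [hh] at hc
    have hconjle : κ.conj j ≤ κ.conj 0 := κ.conj_anti (Nat.zero_le j)
    have hbx : κ.bseq i - n = L + j - κ.conj j := by simp only [bseq, hL]; omega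
    refine ⟨by omega, ?_⟩
    rw [mem_betaMap]
    rintro ⟨k, hk⟩
    rw [hbx] at hk
    exact κ.g_not_bseq j k (by rw [hk, hL])
  · rintro ⟨hn1, hn2⟩
    set x : ℤ := κ.bseq i - n with hx
    have hx0 : 0 ≤ x := by
      by_contra h
      exact hn2 (Or.inl (by omega))
    have hgmono : ∀ j : ℕ, (L + j - κ.conj j) + 1 ≤ L + (j+1 : ℕ) - κ.conj (j+1) := by
      intro j
      have := κ.conj_anti (by omega : j ≤ j+1)
      push_cast
      omega
    have hgge : ∀ j : ℕ, (j : ℤ) ≤ L + j - κ.conj j := by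
      intro j
      induction j with
      | zero => simp [hL]
      | succ j ih => have := hgmono j; push_cast at *; omega
    have hex : ∃ j : ℕ, x < L + j - κ.conj j :=
      ⟨(x+1).toNat, by have := hgge (x+1).toNat; omega⟩
    have hmpos : 0 < Nat.find hex := by
      rcases Nat.eq_zero_or_pos (Nat.find hex) with h | h
      swap
      · exact h
      · exfalso; have := Nat.find_spec hex; rw [h] at this; push_cast at this; omega
    set j := Nat.find hex - 1 with hj
    have hjle : ¬ x < L + j - κ.conj j := Nat.find_min hex (by omega)
    have hjlt : x < L + ((j+1 : ℕ) : ℤ) - κ.conj (j+1) := by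
      have h1 := Nat.find_spec hex
      have hje : Nat.find hex = j + 1 := by omega
      rw [hje] at h1
      exact h1
    have hgj : L + j - κ.conj j = x := by
      by_contra hne
      have hlt : L + j - κ.conj j < x := by omega
      set t : ℤ := L + j - x with ht
      have ht1 : t < κ.conj j := by omega
      have ht2 : (κ.conj (j+1) : ℤ) ≤ t := by push_cast at hjlt; omega
      have ht0 : 0 ≤ t := by omega
      set k := t.toNat with hk
      have hk1 : (k : ℤ) = t := Int.toNat_of_nonneg ht0
      have hpk1 : j < κ.parts k := (κ.lt_conj_iff k j).1 (by omega)
      have hpk2 : ¬ (j+1) < κ.parts k := by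
        intro hh
        have := (κ.lt_conj_iff k (j+1)).2 hh
        omega
      have hbk : κ.bseq k = x := by simp only [bseq, hL]; omega
      exact hn2 ((κ.mem_betaMap x).2 ⟨k, hbk⟩)
    have hji : j < κ.parts i := by
      by_contra h
      push_neg at h
      have hc : ¬ i < κ.conj j := by
        intro hh
        have := (κ.lt_conj_iff i j).1 hh
        omega
      have hbi : κ.bseq i = (κ.parts i : ℤ) + L - 1 - i := by
        simp only [bseq, hL]
      omega
    refine ⟨j, hji, ?_⟩
    have hc := κ.hook_cast (hji : κ.IsCell i j)
    have hfin : (κ.hook i j : ℤ) = (n : ℤ) := by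
      rw [hc]
      simp only [bseq, hL] at hx hgj
      omega
    exact_mod_cast hfin

lemma core_iff_flush (κ : YPartition) {n : ℕ} (hn : 1 ≤ n) :
    IsCore n κ ↔ IsFlush n (betaMap κ) := by
  constructor
  · intro hcore z hz
    rcases lt_or_ge (z - n) 0 with h | h
    · exact Or.inl h
    obtain ⟨i, hi⟩ := (κ.mem_betaMap z).1 hz
    have hpi : 0 < κ.parts i := by
      by_contra hp
      push_neg at hp
      have hp0 : κ.parts i = 0 := by omega
      have hcc : ¬ i < κ.conj 0 := by
        intro hh
        have := (κ.lt_conj_iff i 0).1 hh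
        omega
      simp only [bseq, hp0] at hi
      omega
    by_contra hmem
    obtain ⟨j, hcell, hh⟩ :=
      (κ.row_hook_iff hn hpi).2 ⟨by omega, by rw [hi]; exact hmem⟩
    exact hcore i j hcell hh
  · intro hfl i j hcell hh
    have hpi : 0 < κ.parts i := by
      have : j < κ.parts i := hcell
      omega
    have h1 := (κ.row_hook_iff hn hpi).1 ⟨j, hcell, hh⟩
    have h2 : κ.bseq i ∈ betaMap κ := (κ.mem_betaMap _).2 ⟨i, rfl⟩
    exact h1.2 (hfl _ h2)

end YPartition

namespace YPartition

lemma betaMap_mem_target (κ : YPartition) {n : ℕ} (hn : 1 ≤ n) (hκ : IsCore n κ) :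
    IsAbacus (betaMap κ) ∧ Normalised (betaMap κ) ∧ IsFlush n (betaMap κ) := by
  refine ⟨⟨0, κ.bseq 0, fun z hz => Or.inl hz, ?_⟩, ⟨?_, fun z hz => Or.inl hz⟩,
    (κ.core_iff_flush hn).1 hκ⟩
  · intro z hz hmem
    obtain ⟨i, hi⟩ := (κ.mem_betaMap z).1 hmem
    have : κ.bseq i ≤ κ.bseq 0 := (κ.bseq_strictAnti).antitone (Nat.zero_le i)
    omega
  · intro hmem
    obtain ⟨i, hi⟩ := (κ.mem_betaMap 0).1 hmem
    exact κ.bseq_ne_zero i hi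

lemma betaMap_injective : Function.Injective betaMap := by
  intro κ κ' h
  have hr : Set.range κ.bseq = Set.range κ'.bseq := by
    ext z
    simp only [Set.mem_range]
    rw [show (∃ y, κ.bseq y = z) ↔ z ∈ betaMap κ from (κ.mem_betaMap z).symm,
      show (∃ y, κ'.bseq y = z) ↔ z ∈ betaMap κ' from (κ'.mem_betaMap z).symm, h]
  have h1 : StrictMono (OrderDual.toDual ∘ κ.bseq) := fun a b hab => κ.bseq_strictAnti hab
  have h2 : StrictMono (OrderDual.toDual ∘ κ'.bseq) := fun a b hab => κ'.bseq_strictAnti hab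
  have hr2 : Set.range (OrderDual.toDual ∘ κ.bseq) = Set.range (OrderDual.toDual ∘ κ'.bseq) := by
    rw [Set.range_comp, Set.range_comp, hr]
  have h3 := (h1.range_inj h2).1 hr2
  have hb : ∀ i, κ.bseq i = κ'.bseq i := by
    intro i
    have := congrFun h3 i
    exact OrderDual.toDual.injective this
  obtain ⟨N, hN⟩ := κ.exists_zero
  obtain ⟨N', hN'⟩ := κ'.exists_zero
  have hzM : κ.parts (max N N') = 0 := by have := κ.antitone (le_max_left N N'); omega
  have hzM' : κ'.parts (max N N') = 0 := by have := κ'.antitone (le_max_right N N'); omega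
  have hL : κ.conj 0 = κ'.conj 0 := by
    have := hb (max N N')
    simp only [bseq, hzM, hzM'] at this
    omega
  have hparts : κ.parts = κ'.parts := by
    funext i
    have := hb i
    simp only [bseq, hL] at this
    omega
  cases κ; cases κ'
  simpa using hparts

lemma strictMono_fin_le {m : ℕ} {g : Fin m → ℤ} (hg : StrictMono g) :
    ∀ (d : ℕ) (a b : Fin m), (b : ℕ) = (a : ℕ) + d → g a + d ≤ g b := by
  intro d
  induction d with
  | zero =>
    intro a b hb
    have : a = b := Fin.ext (by omega)
    simp [this]
  | succ d ih =>
    intro a b hb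
    have hm : (a : ℕ) + d < m := by omega
    have h1 := ih a ⟨(a : ℕ) + d, hm⟩ rfl
    have h2 : g ⟨(a : ℕ) + d, hm⟩ < g b := hg (by rw [Fin.lt_def]; simp only [Fin.val_mk]; omega)
    push_cast at *
    omega

lemma exists_preimage {n : ℕ} (hn : 1 ≤ n) (A : Set ℤ) (hab : IsAbacus A)
    (hnorm : Normalised A) (hfl : IsFlush n A) :
    ∃ κ : YPartition, IsCore n κ ∧ betaMap κ = A := by
  classical
  obtain ⟨a, bd, ha, hb⟩ := hab
  have hsub : A ∩ Set.Ici 0 ⊆ Set.Icc 0 bd := by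
    rintro z ⟨hz1, hz2⟩
    refine ⟨hz2, ?_⟩
    by_contra h
    exact hb z (by omega) hz1
  have hfin : (A ∩ Set.Ici 0).Finite := (Set.finite_Icc 0 bd).subset hsub
  set F := hfin.toFinset with hF
  set L := F.card with hLdef
  set f : Fin L ↪o ℤ := F.orderEmbOfFin rfl with hf
  have hmemF : ∀ z, z ∈ F ↔ z ∈ A ∧ 0 ≤ z := by
    intro z
    rw [hF, Set.Finite.mem_toFinset]
    exact Iff.rfl
  have hfmem : ∀ k : Fin L, f k ∈ A ∧ 1 ≤ f k := by
    intro k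
    have h1 : f k ∈ F := F.orderEmbOfFin_mem rfl k
    rw [hmemF] at h1
    have h0 : f k ≠ 0 := by
      intro h
      rw [h] at h1
      exact hnorm.1 h1.1
    refine ⟨h1.1, ?_⟩
    have := h1.2
    omega
  have hflb : ∀ k : Fin L, ((k : ℕ) : ℤ) + 1 ≤ f k := by
    intro k
    have h0 : (0 : ℕ) < L := k.pos
    have hsme := strictMono_fin_le f.strictMono (k : ℕ) ⟨0, h0⟩ k (by simp)
    have hmem0 := (hfmem ⟨0, h0⟩).2
    omega
  have heL : ∀ i, i < L → L - 1 - i < L := by intro i h; omega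
  set e : ℕ → ℤ := fun i => if h : L - 1 - i < L then f ⟨L-1-i, h⟩ else 0 with he
  have he_eq : ∀ i (h : i < L), e i = f ⟨L-1-i, heL i h⟩ := by
    intro i h
    simp only [he, dif_pos (heL i h)]
  have he_mem : ∀ i, i < L → e i ∈ A ∧ 1 ≤ e i := by
    intro i h
    rw [he_eq i h]
    exact hfmem _
  have he_lb : ∀ i, i < L → (L : ℤ) - i ≤ e i := by
    intro i h
    rw [he_eq i h]
    have := hflb ⟨L-1-i, heL i h⟩
    simp only [Fin.val_mk] at this
    omega
  have he_strict : ∀ i i', i < i' → i' < L → e i' < e i := by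
    intro i i' h1 h2
    rw [he_eq i (by omega), he_eq i' h2]
    exact f.strictMono (by rw [Fin.lt_def]; simp only [Fin.val_mk]; omega)
  have he_surj : ∀ z, z ∈ A → 0 ≤ z → ∃ i, i < L ∧ e i = z := by
    intro z hz h0
    have hzF : z ∈ F := (hmemF z).2 ⟨hz, h0⟩
    have hzr : z ∈ Set.range f := by
      rw [F.range_orderEmbOfFin rfl]
      exact_mod_cast hzF
    obtain ⟨k, hk⟩ := hzr
    have hkl : (k : ℕ) < L := k.isLt
    refine ⟨L - 1 - (k : ℕ), by omega, ?_⟩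
    rw [he_eq _ (by omega)]
    rw [show (⟨L-1-(L-1-(k:ℕ)), heL _ (by omega)⟩ : Fin L) = k from Fin.ext (by simp only [Fin.val_mk]; omega)]
    exact hk
  set p : ℕ → ℕ := fun i => if i < L then (e i + i + 1 - L).toNat else 0 with hp
  have hpeq : ∀ i, i < L → (p i : ℤ) = e i + i + 1 - L ∧ 0 < p i := by
    intro i h
    have hlb := he_lb i h
    simp only [hp, if_pos h]
    omega
  have hp0 : ∀ i, L ≤ i → p i = 0 := by
    intro i h
    simp only [hp, if_neg (by omega : ¬ i < L)]
  have hstep : ∀ i, p (i + 1) ≤ p i := by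
    intro i
    rcases lt_or_ge (i+1) L with h | h
    · have hs := he_strict i (i+1) (by omega) h
      have h1 := hpeq i (by omega)
      have h2 := hpeq (i+1) h
      omega
    · rw [hp0 (i+1) h]
      exact Nat.zero_le _
  set κ : YPartition := ⟨p, antitone_nat_of_succ_le hstep, ⟨L, hp0 L le_rfl⟩⟩ with hκ
  have hparts : κ.parts = p := rfl
  have hco : κ.conj 0 = L := by
    have h1 : ∀ i, i < κ.conj 0 ↔ i < L := by
      intro i
      rw [κ.lt_conj_iff i 0, hparts]
      constructor
      · intro h
        by_contra hc
        push_neg at hc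
        have := hp0 i hc
        omega
      · intro h
        exact (hpeq i h).2
    have h2 := h1 (κ.conj 0)
    have h3 := h1 L
    omega
  have hbs : ∀ i, i < L → κ.bseq i = e i := by
    intro i h
    have := (hpeq i h).1
    simp only [bseq, hparts, hco]
    omega
  have hbneg : ∀ i, L ≤ i → κ.bseq i = (L : ℤ) - 1 - i := by
    intro i h
    have := hp0 i h
    simp only [bseq, hparts, hco, this]
    push_cast
    ring
  have hbeta : betaMap κ = A := by
    ext z
    rw [κ.mem_betaMap]
    constructor
    · rintro ⟨i, rfl⟩
      rcases lt_or_ge i L with h | h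
      · rw [hbs i h]
        exact (he_mem i h).1
      · rw [hbneg i h]
        refine hnorm.2 _ (by push_cast; omega)
    · intro hz
      rcases lt_or_ge z 0 with h | h
      · refine ⟨((L:ℤ) - 1 - z).toNat, ?_⟩
        rw [hbneg _ (by omega)]
        omega
      · obtain ⟨i, hiL, hie⟩ := he_surj z hz h
        exact ⟨i, by rw [hbs i hiL, hie]⟩
  refine ⟨κ, ?_, hbeta⟩
  exact (κ.core_iff_flush hn).2 (by rw [hbeta]; exact hfl)

end YPartition


/--  is a bijection between -cores and normalised -flush abaci. -/
theorem stmt2 (n : ℕ) (hn : 1 ≤ n) :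
    Set.BijOn betaMap {κ : YPartition | YPartition.IsCore n κ}
      {A : Set ℤ | IsAbacus A ∧ Normalised A ∧ IsFlush n A} := by
  refine ⟨?_, ?_, ?_⟩
  · intro κ hκ
    exact κ.betaMap_mem_target hn hκ
  · intro κ _ κ' _ h
    exact YPartition.betaMap_injective h
  · intro A hA
    obtain ⟨κ, hc, hb⟩ := YPartition.exists_preimage hn A hA.1 hA.2.1 hA.2.2
    exact ⟨κ, hc, hb⟩
end

section
/- Let n, p be positive integers (not necessarily coprime) and κ an n,p-core. Then the multiset H_{n,p}(κ) of hook lengths of cells lying in both an n-row and a p-column equals the multiset H_{p,n}(κ) of hook lengths of cells lying in both a p-row and an n-column. -/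
namespace YPartition

variable (κ : YPartition)


lemma conj_spec (i j : ℕ) : i < κ.conj j ↔ j < κ.parts i := by
  obtain ⟨N, hN⟩ := κ.exists_zero
  have hsub : {x : ℕ | j < κ.parts x} ⊆ Set.Iio N := by
    intro x hx
    simp only [Set.mem_setOf_eq] at hx
    simp only [Set.mem_Iio]
    by_contra hx'
    push_neg at hx'
    have := κ.antitone hx'
    omega
  have hfin : {x : ℕ | j < κ.parts x}.Finite := (Set.finite_Iio N).subset hsub
  constructor
  · intro hi
    by_contra hij
    push_neg at hij
    have hsub2 : {x : ℕ | j < κ.parts x} ⊆ Set.Iio i := by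
      intro x hx
      simp only [Set.mem_setOf_eq] at hx
      simp only [Set.mem_Iio]
      by_contra hx'
      push_neg at hx'
      have := κ.antitone hx'
      omega
    have hle := Set.ncard_le_ncard hsub2 (Set.finite_Iio i)
    have hI : (Set.Iio i).ncard = i := by
      rw [← Finset.coe_Iio, Set.ncard_coe_finset, Nat.card_Iio]
    unfold conj at hi
    omega
  · intro hij
    have hsub2 : Set.Iic i ⊆ {x : ℕ | j < κ.parts x} := by
      intro x hx
      simp only [Set.mem_Iic] at hx
      have := κ.antitone hx
      simp only [Set.mem_setOf_eq]
      omega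
    have hle := Set.ncard_le_ncard hsub2 hfin
    have hI : (Set.Iic i).ncard = i + 1 := by
      rw [← Finset.coe_Iic, Set.ncard_coe_finset, Nat.card_Iic]
    unfold conj
    omega

lemma conj_anti_s3 ⦃j j' : ℕ⦄ (h : j ≤ j') : κ.conj j' ≤ κ.conj j := by
  by_contra hc
  push_neg at hc
  have h1 := (κ.conj_spec (κ.conj j) j').mp hc
  have h2 : κ.conj j < κ.conj j := (κ.conj_spec _ j).mpr (by omega)
  omega

/-- first-column hook arithmetic -/
lemma L1 {i : ℕ} (hi : i < κ.conj 0) : κ.hook i 0 + (i + 1) = κ.parts i + κ.conj 0 := by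
  have h1 : 0 < κ.parts i := (κ.conj_spec i 0).mp hi
  unfold hook
  omega

/-- first-row hook arithmetic -/
lemma L2 {j : ℕ} (hj : j < κ.parts 0) : κ.hook 0 j + (j + 1) = κ.parts 0 + κ.conj j := by
  have h1 : 0 < κ.conj j := (κ.conj_spec 0 j).mpr hj
  unfold hook
  omega

lemma cell_hook {i j : ℕ} (hc : κ.IsCell i j) :
    κ.hook i j + (i + j + 1) = κ.parts i + κ.conj j ∧ 1 ≤ κ.hook i j := by
  have h1 : j < κ.parts i := hc
  have h2 : i < κ.conj j := (κ.conj_spec i j).mpr hc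
  unfold hook
  omega

lemma cell_row_lt {i j : ℕ} (hc : κ.IsCell i j) : i < κ.conj 0 :=
  (κ.conj_spec i 0).mpr (by have : j < κ.parts i := hc; omega)

lemma cell_col_lt {i j : ℕ} (hc : κ.IsCell i j) : j < κ.parts 0 := by
  have h1 : j < κ.parts i := hc
  have := κ.antitone (Nat.zero_le i)
  omega



/-- maximal hook length -/
noncomputable def mval (κ : YPartition) : ℕ := κ.parts 0 + κ.conj 0 - 1

noncomputable def Bf (κ : YPartition) : Finset ℕ :=
  (Finset.range (κ.conj 0)).image (fun i => κ.hook i 0)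
noncomputable def Df (κ : YPartition) : Finset ℕ :=
  (Finset.range (κ.parts 0)).image (fun j => κ.mval - κ.hook 0 j)

variable (κ : YPartition)

lemma hm (ha : 0 < κ.parts 0) : κ.mval + 1 = κ.parts 0 + κ.conj 0 := by
  have h1 : 0 < κ.conj 0 := (κ.conj_spec 0 0).mpr ha
  unfold mval; omega

lemma hook_col0_le (ha : 0 < κ.parts 0) {i : ℕ} (hi : i < κ.conj 0) :
    κ.hook i 0 ≤ κ.mval := by
  have := κ.L1 hi
  have := κ.hm ha
  have := κ.antitone (Nat.zero_le i)
  omega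

lemma hook_row0_le (ha : 0 < κ.parts 0) {j : ℕ} (hj : j < κ.parts 0) :
    κ.hook 0 j ≤ κ.mval := by
  have := κ.L2 hj
  have := κ.hm ha
  have := κ.conj_anti_s3 (Nat.zero_le j)
  omega

lemma sum_cell (ha : 0 < κ.parts 0) {i j : ℕ} (hc : κ.IsCell i j) :
    κ.hook i 0 + κ.hook 0 j = κ.mval + κ.hook i j := by
  have h1 := κ.L1 (κ.cell_row_lt hc)
  have h2 := κ.L2 (κ.cell_col_lt hc)
  have h3 := κ.cell_hook hc
  have h4 := κ.hm ha
  omega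

lemma sum_noncell (ha : 0 < κ.parts 0) {i j : ℕ} (hi : i < κ.conj 0) (hj : j < κ.parts 0)
    (hc : ¬ κ.IsCell i j) : κ.hook i 0 + κ.hook 0 j < κ.mval := by
  have h1 := κ.L1 hi
  have h2 := κ.L2 hj
  have h4 := κ.hm ha
  have h5 : ¬ (j < κ.parts i) := hc
  have h6 : ¬ (i < κ.conj j) := fun hx => hc ((κ.conj_spec i j).mp hx)
  omega

lemma cell_of_sum (ha : 0 < κ.parts 0) {i j : ℕ} (hi : i < κ.conj 0) (hj : j < κ.parts 0)
    (hs : κ.mval < κ.hook i 0 + κ.hook 0 j) : κ.IsCell i j := by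
  by_contra hc
  have := κ.sum_noncell ha hi hj hc
  omega

lemma mem_Bf {x : ℕ} : x ∈ κ.Bf ↔ ∃ i, i < κ.conj 0 ∧ κ.hook i 0 = x := by
  simp [Bf]

lemma mem_Df {x : ℕ} : x ∈ κ.Df ↔ ∃ j, j < κ.parts 0 ∧ κ.mval - κ.hook 0 j = x := by
  simp [Df]

lemma hook_col0_strict {i i' : ℕ} (h : i < i') (hi' : i' < κ.conj 0) :
    κ.hook i' 0 < κ.hook i 0 := by
  have h1 := κ.L1 (lt_trans h hi')
  have h2 := κ.L1 hi'
  have := κ.antitone (le_of_lt h)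
  omega

lemma hook_row0_strict {j j' : ℕ} (h : j < j') (hj' : j' < κ.parts 0) :
    κ.hook 0 j' < κ.hook 0 j := by
  have h1 := κ.L2 (lt_trans h hj')
  have h2 := κ.L2 hj'
  have := κ.conj_anti_s3 (le_of_lt h)
  omega

lemma card_Bf : κ.Bf.card = κ.conj 0 := by
  unfold Bf
  rw [Finset.card_image_of_injOn, Finset.card_range]
  intro i hi i' hi' hee
  simp only [Finset.coe_range, Set.mem_Iio] at hi hi'
  dsimp only at hee
  rcases lt_trichotomy i i' with hlt | heq | hgt
  · have := κ.hook_col0_strict hlt hi'; omega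
  · exact heq
  · have := κ.hook_col0_strict hgt hi; omega

lemma card_Df (ha : 0 < κ.parts 0) : κ.Df.card = κ.parts 0 := by
  unfold Df
  rw [Finset.card_image_of_injOn, Finset.card_range]
  intro j hj j' hj' hee
  simp only [Finset.coe_range, Set.mem_Iio] at hj hj'
  dsimp only at hee
  rcases lt_trichotomy j j' with hlt | heq | hgt
  · have := κ.hook_row0_strict hlt hj'
    have := κ.hook_row0_le ha hj
    have := κ.hook_row0_le ha hj'
    omega
  · exact heq
  · have := κ.hook_row0_strict hgt hj
    have := κ.hook_row0_le ha hj
    have := κ.hook_row0_le ha hj'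
    omega

lemma Bf_Df_disjoint (ha : 0 < κ.parts 0) {x : ℕ} (hb : x ∈ κ.Bf) (hd : x ∈ κ.Df) : False := by
  obtain ⟨i, hi, hix⟩ := (κ.mem_Bf).mp hb
  obtain ⟨j, hj, hjx⟩ := (κ.mem_Df).mp hd
  have hle := κ.hook_row0_le ha hj
  have hsum : κ.hook i 0 + κ.hook 0 j = κ.mval := by omega
  by_cases hc : κ.IsCell i j
  · have := κ.sum_cell ha hc
    have := (κ.cell_hook hc).2
    omega
  · have := κ.sum_noncell ha hi hj hc
    omega

lemma Bf_union_Df (ha : 0 < κ.parts 0) : κ.Bf ∪ κ.Df = Finset.range (κ.mval + 1) := by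
  apply Finset.eq_of_subset_of_card_le
  · intro x hx
    rw [Finset.mem_union] at hx
    rw [Finset.mem_range]
    rcases hx with hx | hx
    · obtain ⟨i, hi, hix⟩ := (κ.mem_Bf).mp hx
      have := κ.hook_col0_le ha hi
      omega
    · obtain ⟨j, hj, hjx⟩ := (κ.mem_Df).mp hx
      omega
  · have hdisj : Disjoint κ.Bf κ.Df := by
      rw [Finset.disjoint_left]
      intro x hb hd
      exact κ.Bf_Df_disjoint ha hb hd
    rw [Finset.card_range, Finset.card_union_of_disjoint hdisj, κ.card_Bf, κ.card_Df ha]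
    have := κ.hm ha
    omega

lemma mem_union_of_le (ha : 0 < κ.parts 0) {x : ℕ} (hx : x ≤ κ.mval) :
    x ∈ κ.Bf ∨ x ∈ κ.Df := by
  have : x ∈ κ.Bf ∪ κ.Df := by
    rw [κ.Bf_union_Df ha, Finset.mem_range]; omega
  rwa [Finset.mem_union] at this

lemma mem_colHooks0 {x : ℕ} : x ∈ κ.colHooks 0 ↔ x ∈ κ.Bf := by
  rw [κ.mem_Bf]
  constructor
  · rintro ⟨i, hci, hix⟩
    exact ⟨i, κ.cell_row_lt hci, hix⟩
  · rintro ⟨i, hi, hix⟩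
    exact ⟨i, (κ.conj_spec i 0).mp hi, hix⟩

lemma mem_rowHooks0 {x : ℕ} : x ∈ κ.rowHooks 0 ↔ ∃ j, j < κ.parts 0 ∧ κ.hook 0 j = x := by
  constructor
  · rintro ⟨j, hcj, hjx⟩
    exact ⟨j, κ.cell_col_lt hcj, hjx⟩
  · rintro ⟨j, hj, hjx⟩
    exact ⟨j, hj, hjx⟩



lemma core_closure (κ : YPartition) {n : ℕ} (ha : 0 < κ.parts 0) (hn : 0 < n)
    (hcore : IsCore n κ) : ∀ b ∈ κ.Bf, n ≤ b → b - n ∈ κ.Bf := by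
  intro b hb hnb
  obtain ⟨i, hi, hib⟩ := (κ.mem_Bf).mp hb
  have hble : b ≤ κ.mval := by
    have := κ.hook_col0_le ha hi; omega
  rcases κ.mem_union_of_le ha (show b - n ≤ κ.mval by omega) with hmem | hmem
  · exact hmem
  · exfalso
    obtain ⟨j, hj, hjx⟩ := (κ.mem_Df).mp hmem
    have hjle := κ.hook_row0_le ha hj
    have hsum : κ.mval < κ.hook i 0 + κ.hook 0 j := by omega
    have hcell := κ.cell_of_sum ha hi hj hsum
    have hsc := κ.sum_cell ha hcell
    exact hcore i j hcell (by omega)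


end YPartition






lemma count_key (m h n p : ℕ) (hh : 1 ≤ h) (B C : Finset ℕ)
    (hdisj : ∀ x, x ∈ B → x ∈ C → False)
    (hunion : ∀ x, x ≤ m → x ∈ B ∨ x ∈ C)
    (hBm : ∀ x ∈ B, x ≤ m) (hCm : ∀ x ∈ C, x ≤ m)
    (hKn : ∀ b ∈ B, n ≤ b → b - n ∈ B)
    (hKp : ∀ b ∈ B, p ≤ b → b - p ∈ B) :
    (C.filter (fun c => c + h ∈ B ∧ c + h + n ∉ B ∧ (p ≤ c → c - p ∈ B))).card
      + (C.filter (fun c => c + h + n ∈ B)).card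
      + (C.filter (fun c => c + h + p ∈ B)).card
    = (C.filter (fun c => c + h ∈ B)).card
      + (C.filter (fun c => c + h + n + p ∈ B)).card := by
  classical
  -- split S₀ by whether c+h+n ∈ B
  have s1 := Finset.card_filter_add_card_filter_not
    (s := C.filter (fun c => c + h ∈ B)) (p := fun c => c + h + n ∈ B)
  rw [Finset.filter_filter, Finset.filter_filter] at s1
  -- the first piece is Sₙ
  have e1 : C.filter (fun c => c + h ∈ B ∧ c + h + n ∈ B)
      = C.filter (fun c => c + h + n ∈ B) := by
    apply Finset.filter_congr
    intro c _
    constructor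
    · exact fun hx => hx.2
    · intro hx
      refine ⟨?_, hx⟩
      have := hKn _ hx (by omega)
      simpa using this
  rw [e1] at s1
  -- split the second piece by the p-condition
  have s2 := Finset.card_filter_add_card_filter_not
    (s := C.filter (fun c => c + h ∈ B ∧ ¬ c + h + n ∈ B))
    (p := fun c => p ≤ c → c - p ∈ B)
  rw [Finset.filter_filter, Finset.filter_filter] at s2
  -- first subpiece is the main count N
  have e2 : C.filter (fun c => (c + h ∈ B ∧ ¬ c + h + n ∈ B) ∧ (p ≤ c → c - p ∈ B))
      = C.filter (fun c => c + h ∈ B ∧ c + h + n ∉ B ∧ (p ≤ c → c - p ∈ B)) := by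
    apply Finset.filter_congr
    intro c _
    tauto
  rw [e2] at s2
  -- the other subpiece is in bijection with D
  have e3 : (C.filter (fun c => (c + h ∈ B ∧ ¬ c + h + n ∈ B) ∧ ¬(p ≤ c → c - p ∈ B))).card
      = (C.filter (fun c => c + h + p ∈ B ∧ c + h + p + n ∉ B)).card := by
    apply Finset.card_bij (fun c _ => c - p)
    · intro c hc
      simp only [Finset.mem_filter] at hc ⊢
      obtain ⟨hcC, ⟨hc1, hc2⟩, hc3⟩ := hc
      push_neg at hc3
      obtain ⟨hpc, hcpB⟩ := hc3
      have hcpC : c - p ∈ C := by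
        rcases hunion (c - p) (by have := hCm c hcC; omega) with hx | hx
        · exact absurd hx hcpB
        · exact hx
      refine ⟨hcpC, ?_, ?_⟩
      · have : c - p + h + p = c + h := by omega
        rwa [this]
      · have : c - p + h + p + n = c + h + n := by omega
        rwa [this]
    · intro c₁ hc₁ c₂ hc₂ hee
      simp only [Finset.mem_filter] at hc₁ hc₂
      have h1 : p ≤ c₁ := by by_contra hx; exact hc₁.2.2 (fun hy => absurd hy hx)
      have h2 : p ≤ c₂ := by by_contra hx; exact hc₂.2.2 (fun hy => absurd hy hx)
      omega
    · intro d hd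
      simp only [Finset.mem_filter] at hd
      obtain ⟨hdC, hd1, hd2⟩ := hd
      refine ⟨d + p, ?_, by omega⟩
      simp only [Finset.mem_filter]
      have hdm : d + p ≤ m := by
        have := hBm _ hd1; omega
      have hdpC : d + p ∈ C := by
        rcases hunion (d + p) hdm with hx | hx
        · exfalso
          have := hKp _ hx (by omega)
          simp only [Nat.add_sub_cancel] at this
          exact hdisj d this hdC
        · exact hx
      refine ⟨hdpC, ⟨?_, ?_⟩, ?_⟩
      · have : d + p + h = d + h + p := by omega
        rwa [this]
      · have : d + p + h + n = d + h + p + n := by omega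
        rw [this]; exact hd2
      · intro hcon
        have hcon2 := hcon (by omega)
        simp only [Nat.add_sub_cancel] at hcon2
        exact hdisj d hcon2 hdC
  -- split S_p by whether c+h+p+n ∈ B
  have s3 := Finset.card_filter_add_card_filter_not
    (s := C.filter (fun c => c + h + p ∈ B)) (p := fun c => c + h + p + n ∈ B)
  rw [Finset.filter_filter, Finset.filter_filter] at s3
  have e4 : C.filter (fun c => c + h + p ∈ B ∧ c + h + p + n ∈ B)
      = C.filter (fun c => c + h + n + p ∈ B) := by
    apply Finset.filter_congr
    intro c _
    have hq : c + h + p + n = c + h + n + p := by omega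
    rw [hq]
    constructor
    · exact fun hx => hx.2
    · intro hx
      refine ⟨?_, hx⟩
      have := hKn _ (by rwa [← hq] at hx) (by omega)
      have he : c + h + p + n - n = c + h + p := by omega
      rwa [he] at this
  rw [e4] at s3
  omega


/-- For an `n,p`-core `κ` (with `n, p` not necessarily coprime), the multiset
of hook lengths of cells lying in an `n`-row and a `p`-column equals the
multiset of hook lengths of cells lying in a `p`-row and an `n`-column:
each value occurs equally often in both. -/
theorem stmt3 (n p : ℕ) (hn : 1 ≤ n) (hp : 1 ≤ p) (κ : YPartition)
    (hκn : YPartition.IsCore n κ) (hκp : YPartition.IsCore p κ) :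
    ∀ h : ℕ,
      Set.ncard {c : ℕ × ℕ | κ.IsCell c.1 c.2 ∧ κ.IsNRow n c.1 ∧ κ.IsNCol p c.2 ∧
          κ.hook c.1 c.2 = h}
        = Set.ncard {c : ℕ × ℕ | κ.IsCell c.1 c.2 ∧ κ.IsNRow p c.1 ∧ κ.IsNCol n c.2 ∧
            κ.hook c.1 c.2 = h} := by
  classical
  intro h
  by_cases ha : 0 < κ.parts 0
  swap
  · have hset : ∀ q r : ℕ, {c : ℕ × ℕ | κ.IsCell c.1 c.2 ∧ κ.IsNRow q c.1 ∧ κ.IsNCol r c.2 ∧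
        κ.hook c.1 c.2 = h} = (∅ : Set (ℕ × ℕ)) := by
      intro q r
      ext c
      simp only [Set.mem_setOf_eq, Set.mem_empty_iff_false, iff_false, not_and]
      intro hc
      exfalso
      have := κ.cell_col_lt hc
      omega
    rw [hset, hset]
  by_cases hh : 1 ≤ h
  swap
  · have hset : ∀ q r : ℕ, {c : ℕ × ℕ | κ.IsCell c.1 c.2 ∧ κ.IsNRow q c.1 ∧ κ.IsNCol r c.2 ∧
        κ.hook c.1 c.2 = h} = (∅ : Set (ℕ × ℕ)) := by
      intro q r
      ext c
      simp only [Set.mem_setOf_eq, Set.mem_empty_iff_false, iff_false, not_and]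
      intro hc _ _ hhk
      have := (κ.cell_hook hc).2
      omega
    rw [hset, hset]
  -- main case
  have key : ∀ q r : ℕ, 0 < q → 0 < r →
      {c : ℕ × ℕ | κ.IsCell c.1 c.2 ∧ κ.IsNRow q c.1 ∧ κ.IsNCol r c.2 ∧
          κ.hook c.1 c.2 = h}.ncard
        = (κ.Df.filter (fun c => c + h ∈ κ.Bf ∧ c + h + q ∉ κ.Bf ∧
            (r ≤ c → c - r ∈ κ.Bf))).card := by
    intro q r hq hr
    set S := {c : ℕ × ℕ | κ.IsCell c.1 c.2 ∧ κ.IsNRow q c.1 ∧ κ.IsNCol r c.2 ∧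
        κ.hook c.1 c.2 = h} with hS
    have hinj : Set.InjOn (fun c : ℕ × ℕ => κ.mval - κ.hook 0 c.2) S := by
      rintro ⟨i, j⟩ hij ⟨i', j'⟩ hij' hee
      simp only [hS, Set.mem_setOf_eq] at hij hij'
      obtain ⟨hc, _, _, hhk⟩ := hij
      obtain ⟨hc', _, _, hhk'⟩ := hij'
      dsimp only at hee hhk hhk'
      have hj : j < κ.parts 0 := κ.cell_col_lt hc
      have hj' : j' < κ.parts 0 := κ.cell_col_lt hc'
      have hle := κ.hook_row0_le ha hj
      have hle' := κ.hook_row0_le ha hj'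
      have hgg : κ.hook 0 j = κ.hook 0 j' := by omega
      have hjj : j = j' := by
        rcases lt_trichotomy j j' with hlt | heq | hgt
        · have := κ.hook_row0_strict hlt hj'; omega
        · exact heq
        · have := κ.hook_row0_strict hgt hj; omega
      subst hjj
      have hs1 := κ.sum_cell ha hc
      have hs2 := κ.sum_cell ha hc'
      have hbb : κ.hook i 0 = κ.hook i' 0 := by omega
      have hii : i = i' := by
        rcases lt_trichotomy i i' with hlt | heq | hgt
        · have := κ.hook_col0_strict hlt (κ.cell_row_lt hc'); omega
        · exact heq
        · have := κ.hook_col0_strict hgt (κ.cell_row_lt hc); omega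
      simp [hii]
    have himg : (fun c : ℕ × ℕ => κ.mval - κ.hook 0 c.2) '' S
        = ↑(κ.Df.filter (fun c => c + h ∈ κ.Bf ∧ c + h + q ∉ κ.Bf ∧
            (r ≤ c → c - r ∈ κ.Bf))) := by
      ext c
      simp only [Set.mem_image, Finset.coe_filter, Set.mem_setOf_eq]
      constructor
      · rintro ⟨⟨i, j⟩, hij, hfc⟩
        simp only [hS, Set.mem_setOf_eq] at hij
        obtain ⟨hcell, hrow, hcol, hhk⟩ := hij
        dsimp only at hfc hhk
        have hi : i < κ.conj 0 := κ.cell_row_lt hcell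
        have hj : j < κ.parts 0 := κ.cell_col_lt hcell
        have hgle := κ.hook_row0_le ha hj
        have hsum := κ.sum_cell ha hcell
        have hcB : c + h = κ.hook i 0 := by omega
        refine ⟨?_, ?_, ?_, ?_⟩
        · exact (κ.mem_Df).mpr ⟨j, hj, hfc⟩
        · rw [hcB]
          exact (κ.mem_Bf).mpr ⟨i, hi, rfl⟩
        · rw [hcB]
          intro hmem
          exact hrow.2 ((κ.mem_colHooks0).mpr hmem)
        · intro hrc
          by_contra hnB
          rcases κ.mem_union_of_le ha (show c - r ≤ κ.mval by omega) with hx | hx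
          · exact hnB hx
          · obtain ⟨j'', hj'', hjx⟩ := (κ.mem_Df).mp hx
            have hgle'' := κ.hook_row0_le ha hj''
            have : κ.hook 0 j'' = κ.hook 0 j + r := by omega
            exact hcol.2 ((κ.mem_rowHooks0).mpr ⟨j'', hj'', this⟩)
      · rintro ⟨hcD, hcB, hcBn, hcr⟩
        obtain ⟨j, hj, hjc⟩ := (κ.mem_Df).mp hcD
        obtain ⟨i, hi, hib⟩ := (κ.mem_Bf).mp hcB
        have hgle := κ.hook_row0_le ha hj
        have hsum : κ.mval < κ.hook i 0 + κ.hook 0 j := by omega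
        have hcell := κ.cell_of_sum ha hi hj hsum
        have hsc := κ.sum_cell ha hcell
        have hhk : κ.hook i j = h := by omega
        refine ⟨(i, j), ?_, by dsimp only; omega⟩
        simp only [hS, Set.mem_setOf_eq]
        refine ⟨hcell, ⟨?_, ?_⟩, ⟨?_, ?_⟩, hhk⟩
        · exact (κ.conj_spec i 0).mp hi
        · intro hmem
          have := (κ.mem_colHooks0).mp hmem
          rw [show κ.hook i 0 + q = c + h + q by omega] at this
          exact hcBn this
        · exact hj
        · intro hmem
          obtain ⟨j', hj', hjx'⟩ := (κ.mem_rowHooks0).mp hmem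
          have hgle' := κ.hook_row0_le ha hj'
          have hrc2 : r ≤ c := by omega
          have hBrc := hcr hrc2
          have : c - r ∈ κ.Df := (κ.mem_Df).mpr ⟨j', hj', by omega⟩
          exact κ.Bf_Df_disjoint ha hBrc this
    calc S.ncard = ((fun c : ℕ × ℕ => κ.mval - κ.hook 0 c.2) '' S).ncard :=
          (Set.ncard_image_of_injOn hinj).symm
      _ = _ := by rw [himg, Set.ncard_coe_finset]
  have hBm : ∀ x ∈ κ.Bf, x ≤ κ.mval := by
    intro x hx
    obtain ⟨i, hi, hix⟩ := (κ.mem_Bf).mp hx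
    have := κ.hook_col0_le ha hi
    omega
  have hDm : ∀ x ∈ κ.Df, x ≤ κ.mval := by
    intro x hx
    obtain ⟨j, hj, hjx⟩ := (κ.mem_Df).mp hx
    omega
  have hdisj : ∀ x, x ∈ κ.Bf → x ∈ κ.Df → False := fun x => κ.Bf_Df_disjoint ha
  have huni : ∀ x, x ≤ κ.mval → x ∈ κ.Bf ∨ x ∈ κ.Df := fun x => κ.mem_union_of_le ha
  have hKn := κ.core_closure ha (by omega : 0 < n) hκn
  have hKp := κ.core_closure ha (by omega : 0 < p) hκp
  have cnt1 := count_key κ.mval h n p hh κ.Bf κ.Df hdisj huni hBm hDm hKn hKp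
  have cnt2 := count_key κ.mval h p n hh κ.Bf κ.Df hdisj huni hBm hDm hKp hKn
  have e : κ.Df.filter (fun c => c + h + p + n ∈ κ.Bf)
      = κ.Df.filter (fun c => c + h + n + p ∈ κ.Bf) := by
    apply Finset.filter_congr
    intro c _
    rw [show c + h + p + n = c + h + n + p by omega]
  rw [e] at cnt2
  rw [key n p (by omega) (by omega), key p n (by omega) (by omega)]
  omega
end

section
/- Let κ be an n,p-core. Then the skew length of κ is symmetric in n and p: the number of cells in n-rows of κ with hook length less than p equals the number of cells in p-rows of κ with hook length less than n. -/
namespace SkewAux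

/-- Descend in steps of `p` within `D`. -/
lemma descendD {p : ℤ} (hp : 0 < p) {D : Set ℤ} (hcl : ∀ x ∈ D, x - p ∈ D)
    {z : ℤ} (hz : z ∈ D) {w : ℤ} (hw : w ≤ z) (hdvd : p ∣ z - w) : w ∈ D := by
  obtain ⟨k, hk⟩ := hdvd
  have hk0 : 0 ≤ k := by nlinarith
  obtain ⟨m, rfl⟩ := Int.eq_ofNat_of_zero_le hk0
  have key : ∀ m : ℕ, ∀ z ∈ D, z - w = p * m → w ∈ D := by
    intro m
    induction m with
    | zero =>
        intro z hz h
        have : w = z := by push_cast at h; linarith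
        rwa [this]
    | succ m ih =>
        intro z hz h
        exact ih (z - p) (hcl z hz) (by push_cast at h ⊢; linarith)
  exact key m z hz hk

/-- existence of the `p`-top in the class of `b`. -/
lemma exists_top {p : ℤ} (hp : 0 < p) {D : Set ℤ} (hneg : ∀ x : ℤ, x < 0 → x ∈ D)
    {M : ℤ} (hbdd : ∀ x ∈ D, x ≤ M) (b : ℤ) :
    ∃ y, y ∈ D ∧ y + p ∉ D ∧ p ∣ b - y := by
  have Hinh : ∃ z : ℤ, z ∈ D ∧ p ∣ b - z := by
    refine ⟨b - p * (|b| + 1), hneg _ ?_, ⟨|b| + 1, by ring⟩⟩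
    have := abs_nonneg b
    have h1 : b ≤ |b| := le_abs_self b
    nlinarith
  obtain ⟨y, ⟨hyD, hydvd⟩, hmax⟩ := Int.exists_greatest_of_bdd
    ⟨M, fun z hz => hbdd z hz.1⟩ Hinh
  refine ⟨y, hyD, fun hc => ?_, hydvd⟩
  have := hmax (y + p) ⟨hc, by obtain ⟨k, hk⟩ := hydvd; exact ⟨k - 1, by linarith⟩⟩
  linarith

/-- Uniqueness of tops mod p. -/
lemma topUnique {p : ℤ} (hp : 0 < p) {D : Set ℤ} (hcl : ∀ x ∈ D, x - p ∈ D)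
    {y y' : ℤ} (hy : y ∈ D ∧ y + p ∉ D) (hy' : y' ∈ D ∧ y' + p ∉ D)
    (hdvd : p ∣ y - y') : y = y' := by
  rcases lt_trichotomy y y' with h | h | h
  · exfalso
    have h1 : y + p ≤ y' := by
      obtain ⟨k, hk⟩ := hdvd
      have : 1 ≤ -k := by nlinarith
      nlinarith
    exact hy.2 (descendD hp hcl hy'.1 h1 (by obtain ⟨k, hk⟩ := hdvd; exact ⟨-k - 1, by linarith⟩))
  · exact h
  · exfalso
    have h1 : y' + p ≤ y := by
      obtain ⟨k, hk⟩ := hdvd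
      have : 1 ≤ k := by nlinarith
      nlinarith
    exact hy'.2 (descendD hp hcl hy.1 h1 (by obtain ⟨k, hk⟩ := hdvd; exact ⟨k - 1, by linarith⟩))

end SkewAux

namespace SkewAux
open Finset

lemma double_sum_eval (A B : Finset ℤ) (a b x : ℤ) (I : Finset ℤ)
    (hA : ∀ α ∈ A, α - a ∈ I) (hB : ∀ β ∈ B, β - b ∈ I) :
    (∑ v ∈ I, ∑ w ∈ I, (if v + a ∈ A then (1:ℤ) else 0) * ((if w + b ∈ B then (1:ℤ) else 0)
        * (if w + x ≤ v then (1:ℤ) else 0)))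
    = ((A ×ˢ B).filter fun q => q.2 + (x + a - b) ≤ q.1).card := by
  have h1 : ∀ v ∈ I, ∀ w ∈ I,
      (if v + a ∈ A then (1:ℤ) else 0) * ((if w + b ∈ B then (1:ℤ) else 0)
        * (if w + x ≤ v then (1:ℤ) else 0))
      = if (v + a ∈ A ∧ w + b ∈ B ∧ w + x ≤ v) then (1:ℤ) else 0 := by
    intro v _ w _
    split_ifs with h h1 h2 h3 h4 h5 h6 <;> simp_all <;> ring
  calc (∑ v ∈ I, ∑ w ∈ I, (if v + a ∈ A then (1:ℤ) else 0) * ((if w + b ∈ B then (1:ℤ) else 0)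
        * (if w + x ≤ v then (1:ℤ) else 0)))
      = ∑ v ∈ I, ∑ w ∈ I, if (v + a ∈ A ∧ w + b ∈ B ∧ w + x ≤ v) then (1:ℤ) else 0 := by
        refine Finset.sum_congr rfl fun v hv => Finset.sum_congr rfl fun w hw => h1 v hv w hw
    _ = ∑ q ∈ I ×ˢ I, if (q.1 + a ∈ A ∧ q.2 + b ∈ B ∧ q.2 + x ≤ q.1) then (1:ℤ) else 0 := by
        rw [Finset.sum_product]
    _ = (((I ×ˢ I).filter fun q => q.1 + a ∈ A ∧ q.2 + b ∈ B ∧ q.2 + x ≤ q.1).card : ℤ) := by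
        rw [Finset.sum_boole]
    _ = (((A ×ˢ B).filter fun q => q.2 + (x + a - b) ≤ q.1).card : ℤ) := by
        congr 1
        refine Finset.card_bij' (fun q _ => (q.1 + a, q.2 + b)) (fun q _ => (q.1 - a, q.2 - b))
          ?_ ?_ ?_ ?_
        · intro q hq
          simp only [mem_filter, mem_product] at hq ⊢
          exact ⟨⟨hq.2.1, hq.2.2.1⟩, by linarith [hq.2.2.2]⟩
        · intro q hq
          simp only [mem_filter, mem_product] at hq ⊢
          refine ⟨⟨hA _ hq.1.1, hB _ hq.1.2⟩, by simpa using hq.1.1, by simpa using hq.1.2, ?_⟩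
          linarith [hq.2]
        · intro q hq; simp
        · intro q hq; simp

end SkewAux

namespace SkewAux
open Finset

lemma cross_identity (n p : ℤ) (T S : Finset ℤ)
    (hid : ∀ v : ℤ, ((if v ∈ T then (1:ℤ) else 0) + (if v + n ∈ S then 1 else 0))
        = (if v ∈ S then 1 else 0) + (if v + p ∈ T then 1 else 0)) (x : ℤ) :
    ((T ×ˢ S).filter fun q => q.2 + (x - n) ≤ q.1).card
     + ((S ×ˢ T).filter fun q => q.2 + (x + n) ≤ q.1).card
    = ((T ×ˢ S).filter fun q => q.2 + (x + p) ≤ q.1).card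
     + ((S ×ˢ T).filter fun q => q.2 + (x - p) ≤ q.1).card := by
  classical
  obtain ⟨R, hR⟩ := ((T ∪ S).image (fun z => |z| + |n| + |p|)).exists_le
  set I : Finset ℤ := Finset.Icc (-R) R with hI
  have hmem : ∀ z : ℤ, z ∈ T ∪ S → ∀ a : ℤ, (a = 0 ∨ a = n ∨ a = p) → z - a ∈ I := by
    intro z hz a ha
    have h1 := hR _ (Finset.mem_image_of_mem _ hz)
    have h2 : -|z| ≤ z := neg_abs_le z
    have h3 : z ≤ |z| := le_abs_self z
    have h4 : -|n| ≤ n := neg_abs_le n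
    have h5 : n ≤ |n| := le_abs_self n
    have h6 : -|p| ≤ p := neg_abs_le p
    have h7 : p ≤ |p| := le_abs_self p
    have h8 : 0 ≤ |n| := abs_nonneg n
    have h9 : 0 ≤ |p| := abs_nonneg p
    simp only [hI, Finset.mem_Icc]
    rcases ha with rfl | rfl | rfl <;> constructor <;> linarith
  have hT0 : ∀ α ∈ T, α - 0 ∈ I := fun α h => hmem α (Finset.mem_union_left _ h) 0 (Or.inl rfl)
  have hTn : ∀ α ∈ T, α - n ∈ I := fun α h => hmem α (Finset.mem_union_left _ h) n (Or.inr (Or.inl rfl))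
  have hTp : ∀ α ∈ T, α - p ∈ I := fun α h => hmem α (Finset.mem_union_left _ h) p (Or.inr (Or.inr rfl))
  have hS0 : ∀ α ∈ S, α - 0 ∈ I := fun α h => hmem α (Finset.mem_union_right _ h) 0 (Or.inl rfl)
  have hSn : ∀ α ∈ S, α - n ∈ I := fun α h => hmem α (Finset.mem_union_right _ h) n (Or.inr (Or.inl rfl))
  have hSp : ∀ α ∈ S, α - p ∈ I := fun α h => hmem α (Finset.mem_union_right _ h) p (Or.inr (Or.inr rfl))
  -- the double sum, two expansions
  have expand : ∀ (A₁ B₁ A₂ B₂ : Finset ℤ) (a₁ b₁ a₂ b₂ : ℤ),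
      (∀ α ∈ A₁, α - a₁ ∈ I) → (∀ α ∈ B₁, α - b₁ ∈ I) →
      (∀ α ∈ A₂, α - a₂ ∈ I) → (∀ α ∈ B₂, α - b₂ ∈ I) →
      (∑ v ∈ I, ∑ w ∈ I,
        ((if v + a₁ ∈ A₁ then (1:ℤ) else 0) + (if v + a₂ ∈ A₂ then 1 else 0))
        * (((if w + b₁ ∈ B₁ then (1:ℤ) else 0) + (if w + b₂ ∈ B₂ then 1 else 0))
            * (if w + x ≤ v then (1:ℤ) else 0)))
      = ((A₁ ×ˢ B₁).filter fun q => q.2 + (x + a₁ - b₁) ≤ q.1).card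
        + ((A₁ ×ˢ B₂).filter fun q => q.2 + (x + a₁ - b₂) ≤ q.1).card
        + ((A₂ ×ˢ B₁).filter fun q => q.2 + (x + a₂ - b₁) ≤ q.1).card
        + ((A₂ ×ˢ B₂).filter fun q => q.2 + (x + a₂ - b₂) ≤ q.1).card := by
    intro A₁ B₁ A₂ B₂ a₁ b₁ a₂ b₂ h1 h2 h3 h4
    have hpt : ∀ v w : ℤ,
        ((if v + a₁ ∈ A₁ then (1:ℤ) else 0) + (if v + a₂ ∈ A₂ then 1 else 0))
        * (((if w + b₁ ∈ B₁ then (1:ℤ) else 0) + (if w + b₂ ∈ B₂ then 1 else 0))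
            * (if w + x ≤ v then (1:ℤ) else 0))
        = (if v + a₁ ∈ A₁ then (1:ℤ) else 0) * ((if w + b₁ ∈ B₁ then (1:ℤ) else 0) * (if w + x ≤ v then (1:ℤ) else 0))
        + (if v + a₁ ∈ A₁ then (1:ℤ) else 0) * ((if w + b₂ ∈ B₂ then (1:ℤ) else 0) * (if w + x ≤ v then (1:ℤ) else 0))
        + (if v + a₂ ∈ A₂ then (1:ℤ) else 0) * ((if w + b₁ ∈ B₁ then (1:ℤ) else 0) * (if w + x ≤ v then (1:ℤ) else 0))
        + (if v + a₂ ∈ A₂ then (1:ℤ) else 0) * ((if w + b₂ ∈ B₂ then (1:ℤ) else 0) * (if w + x ≤ v then (1:ℤ) else 0)) := by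
      intro v w; ring
    calc (∑ v ∈ I, ∑ w ∈ I,
        ((if v + a₁ ∈ A₁ then (1:ℤ) else 0) + (if v + a₂ ∈ A₂ then 1 else 0))
        * (((if w + b₁ ∈ B₁ then (1:ℤ) else 0) + (if w + b₂ ∈ B₂ then 1 else 0))
            * (if w + x ≤ v then (1:ℤ) else 0)))
        = (∑ v ∈ I, ∑ w ∈ I,
            ((if v + a₁ ∈ A₁ then (1:ℤ) else 0) * ((if w + b₁ ∈ B₁ then (1:ℤ) else 0) * (if w + x ≤ v then (1:ℤ) else 0))
            + (if v + a₁ ∈ A₁ then (1:ℤ) else 0) * ((if w + b₂ ∈ B₂ then (1:ℤ) else 0) * (if w + x ≤ v then (1:ℤ) else 0))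
            + (if v + a₂ ∈ A₂ then (1:ℤ) else 0) * ((if w + b₁ ∈ B₁ then (1:ℤ) else 0) * (if w + x ≤ v then (1:ℤ) else 0))
            + (if v + a₂ ∈ A₂ then (1:ℤ) else 0) * ((if w + b₂ ∈ B₂ then (1:ℤ) else 0) * (if w + x ≤ v then (1:ℤ) else 0)))) := by
          exact Finset.sum_congr rfl fun v _ => Finset.sum_congr rfl fun w _ => hpt v w
      _ = ((A₁ ×ˢ B₁).filter fun q => q.2 + (x + a₁ - b₁) ≤ q.1).card
        + ((A₁ ×ˢ B₂).filter fun q => q.2 + (x + a₁ - b₂) ≤ q.1).card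
        + ((A₂ ×ˢ B₁).filter fun q => q.2 + (x + a₂ - b₁) ≤ q.1).card
        + ((A₂ ×ˢ B₂).filter fun q => q.2 + (x + a₂ - b₂) ≤ q.1).card := by
          simp only [Finset.sum_add_distrib]
          rw [double_sum_eval A₁ B₁ a₁ b₁ x I h1 h2, double_sum_eval A₁ B₂ a₁ b₂ x I h1 h4,
            double_sum_eval A₂ B₁ a₂ b₁ x I h3 h2, double_sum_eval A₂ B₂ a₂ b₂ x I h3 h4]
  have e1 := expand T T S S 0 0 n n hT0 hT0 hSn hSn
  have e2 := expand S S T T 0 0 p p hS0 hS0 hTp hTp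
  have esame : (∑ v ∈ I, ∑ w ∈ I,
        ((if v + 0 ∈ T then (1:ℤ) else 0) + (if v + n ∈ S then 1 else 0))
        * (((if w + 0 ∈ T then (1:ℤ) else 0) + (if w + n ∈ S then 1 else 0))
            * (if w + x ≤ v then (1:ℤ) else 0)))
      = (∑ v ∈ I, ∑ w ∈ I,
        ((if v + 0 ∈ S then (1:ℤ) else 0) + (if v + p ∈ T then 1 else 0))
        * (((if w + 0 ∈ S then (1:ℤ) else 0) + (if w + p ∈ T then 1 else 0))
            * (if w + x ≤ v then (1:ℤ) else 0))) := by
    refine Finset.sum_congr rfl fun v _ => Finset.sum_congr rfl fun w _ => ?_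
    have hv := hid v
    have hw := hid w
    simp only [add_zero, zero_add] at *
    rw [hv, hw]
  rw [e1, e2] at esame
  norm_num at esame
  omega

end SkewAux

namespace SkewAux
open Finset

lemma key_count (n p : ℤ) (hn : 0 < n) (hp : 0 < p) (T S : Finset ℤ)
    (hid : ∀ v : ℤ, ((if v ∈ T then (1:ℤ) else 0) + (if v + n ∈ S then 1 else 0))
        = (if v ∈ S then 1 else 0) + (if v + p ∈ T then 1 else 0)) :
    ((T ×ˢ S).filter fun q => q.2 + p ≤ q.1).card
      = ((S ×ˢ T).filter fun q => q.2 + n ≤ q.1).card := by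
  classical
  set F : ℤ → ℕ := fun t => ((T ×ˢ S).filter fun q => q.2 + t ≤ q.1).card with hF
  set G : ℤ → ℕ := fun t => ((S ×ˢ T).filter fun q => q.2 + t ≤ q.1).card with hG
  have per : ∀ x : ℤ, F (x - n) + G (x + n) = F (x + p) + G (x - p) :=
    fun x => cross_identity n p T S hid x
  obtain ⟨R₁, hR₁⟩ := ((T ×ˢ S).image (fun q => q.1 - q.2)).exists_le
  obtain ⟨R₂, hR₂⟩ := ((S ×ˢ T).image (fun q => q.1 - q.2)).exists_le
  have hFv : ∀ t : ℤ, R₁ < t → F t = 0 := by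
    intro t ht
    simp only [hF]
    rw [Finset.card_eq_zero, Finset.filter_eq_empty_iff]
    intro q hq
    have := hR₁ _ (Finset.mem_image_of_mem _ hq)
    intro hc; omega
  have hGv : ∀ t : ℤ, R₂ < t → G t = 0 := by
    intro t ht
    simp only [hG]
    rw [Finset.card_eq_zero, Finset.filter_eq_empty_iff]
    intro q hq
    have := hR₂ _ (Finset.mem_image_of_mem _ hq)
    intro hc; omega
  set Θ : ℤ → ℤ := fun y => (F (y + p) : ℤ) - (G (y + n) : ℤ) with hΘ
  have hper : ∀ y : ℤ, Θ y = Θ (y + n + p) := by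
    intro y
    have := per (y + n + p)
    simp only [hΘ]
    have h1 : y + n + p - n = y + p := by ring
    have h2 : y + n + p + p = y + p + (n + p) := by ring
    have h3 : y + n + p - p = y + n := by ring
    rw [h1, h3] at this
    have h4 : (y + n + p) + p = y + p + n + p := by ring
    have h5 : (y + n + p) + n = y + n + n + p := by ring
    omega
  have hstep : ∀ k : ℕ, Θ 0 = Θ ((k : ℤ) * (n + p)) := by
    intro k
    induction k with
    | zero => simp
    | succ k ih =>
        rw [ih, hper ((k : ℤ) * (n + p))]
        congr 1
        push_cast
        ring
  set B : ℤ := max R₁ R₂ + 1 with hB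
  have hk : ∀ y : ℤ, B ≤ y → Θ y = 0 := by
    intro y hy
    have h1 : R₁ < y + p := by omega
    have h2 : R₂ < y + n := by omega
    simp only [hΘ, hFv _ h1, hGv _ h2]
    ring
  have hfin : Θ 0 = 0 := by
    rcases le_or_gt B 0 with h | h
    · exact hk 0 h
    · have := hstep B.toNat
      rw [this, hk _ ?_]
      have hb : (B.toNat : ℤ) = B := Int.toNat_of_nonneg (by omega)
      rw [hb]
      nlinarith
  have : (F p : ℤ) = (G n : ℤ) := by
    have := hfin
    simp only [hΘ, zero_add] at this
    omega
  simpa [hF, hG] using this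

end SkewAux

namespace SkewAux
open Finset

lemma side (n p : ℤ) (hn : 0 < n) (hp : 0 < p) (D : Set ℤ)
    (hneg : ∀ x : ℤ, x < 0 → x ∈ D) (M : ℤ) (hbdd : ∀ x ∈ D, x ≤ M)
    (hclp : ∀ x ∈ D, x - p ∈ D)
    (Tn Tp : Finset ℤ)
    (hTn : ∀ x : ℤ, x ∈ Tn ↔ x ∈ D ∧ x + n ∉ D)
    (hTp : ∀ x : ℤ, x ∈ Tp ↔ x ∈ D ∧ x + p ∉ D) :
    {q : ℤ × ℤ | q.1 ∈ D ∧ q.1 + n ∉ D ∧ q.2 ∉ D ∧ q.1 - p < q.2 ∧ q.2 < q.1}.ncard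
      = ((Tn ×ˢ Tp).filter fun q => q.2 + p ≤ q.1).card := by
  classical
  set PS : Set (ℤ × ℤ) := ↑((Tn ×ˢ Tp).filter fun q => q.2 + p ≤ q.1) with hPS
  set g : ℤ × ℤ → ℤ × ℤ := fun q => (q.1, q.1 - (q.1 - q.2) % p) with hg
  have hmemPS : ∀ q : ℤ × ℤ, q ∈ PS ↔ (q.1 ∈ D ∧ q.1 + n ∉ D) ∧ (q.2 ∈ D ∧ q.2 + p ∉ D)
      ∧ q.2 + p ≤ q.1 := by
    intro q
    simp only [hPS, Finset.coe_filter, Set.mem_setOf_eq, Finset.mem_product, hTn, hTp]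
    tauto
  have hinj : Set.InjOn g PS := by
    intro q hq q' hq' heq
    rw [hmemPS] at hq hq'
    simp only [hg, Prod.mk.injEq] at heq
    obtain ⟨h1, h2⟩ := heq
    rw [← h1] at h2
    have h3 : (q.1 - q.2) % p = (q.1 - q'.2) % p := by omega
    have h4 : p ∣ q.2 - q'.2 := by
      have h5 : ((q.1 - q'.2) - (q.1 - q.2)) % p = 0 := by
        rw [Int.sub_emod, h3]; simp
      have h6 := Int.dvd_of_emod_eq_zero h5
      have h7 : (q.1 - q'.2) - (q.1 - q.2) = q.2 - q'.2 := by ring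
      rwa [h7] at h6
    have := topUnique hp hclp hq.2.1 hq'.2.1 h4
    exact Prod.ext h1 this
  have himg : g '' PS = {q : ℤ × ℤ | q.1 ∈ D ∧ q.1 + n ∉ D ∧ q.2 ∉ D ∧ q.1 - p < q.2 ∧ q.2 < q.1} := by
    ext q
    constructor
    · rintro ⟨q', hq', rfl⟩
      rw [hmemPS] at hq'
      obtain ⟨⟨hxD, hxn⟩, ⟨hyD, hyp2⟩, hle⟩ := hq'
      set m := (q'.1 - q'.2) % p with hm
      have hm0 : 0 ≤ m := Int.emod_nonneg _ (by omega)
      have hmp : m < p := Int.emod_lt_of_pos _ hp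
      have hdvd : p ∣ (q'.1 - q'.2) - m := Int.dvd_self_sub_of_emod_eq rfl
      obtain ⟨k, hk⟩ := hdvd
      have hbk : (q'.1 - m) - q'.2 = p * k := by linarith
      have hk1 : 1 ≤ k := by nlinarith
      have hpk : p * (k - 1) = p * k - p := by ring
      have hbD : q'.1 - m ∉ D := by
        intro hc
        apply hyp2
        exact descendD hp hclp hc (by nlinarith) ⟨k - 1, by linarith⟩
      have hmne : m ≠ 0 := by
        intro hc
        apply hyp2
        exact descendD hp hclp hxD (by linarith) ⟨k - 1, by linarith⟩
      simp only [hg, Set.mem_setOf_eq]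
      exact ⟨hxD, hxn, hbD, by omega, by omega⟩
    · rintro ⟨hxD, hxn, hbD, hlb, hub⟩
      obtain ⟨y, hyD, hyp2, hdvd⟩ := exists_top hp hneg hbdd q.2
      have hyb : y < q.2 := by
        by_contra hc
        push_neg at hc
        refine hbD (descendD hp hclp hyD hc ?_)
        obtain ⟨k, hk⟩ := hdvd
        exact ⟨-k, by linarith⟩
      obtain ⟨k, hk⟩ := hdvd
      have hk1 : 1 ≤ k := by nlinarith
      have hyp3 : y + p ≤ q.2 := by nlinarith
      refine ⟨(q.1, y), ?_, ?_⟩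
      · rw [hmemPS]
        exact ⟨⟨hxD, hxn⟩, ⟨hyD, hyp2⟩, by linarith⟩
      · simp only [hg]
        have h2 : (q.1 - y) % p = q.1 - q.2 := by
          have h1 : q.1 - y = (q.1 - q.2) + p * k := by linarith
          rw [h1, Int.add_mul_emod_self_left]
          exact Int.emod_eq_of_lt (by omega) (by omega)
        rw [h2]
        have h3 : q.1 - (q.1 - q.2) = q.2 := by ring
        rw [h3]
  rw [← himg, Set.ncard_image_of_injOn hinj, hPS, Set.ncard_coe_finset]

end SkewAux

namespace SkewAux
open Finset

lemma abstract (n p : ℤ) (hn : 0 < n) (hp : 0 < p) (D : Set ℤ)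
    (hneg : ∀ x : ℤ, x < 0 → x ∈ D) (M : ℤ) (hbdd : ∀ x ∈ D, x ≤ M)
    (hcln : ∀ x ∈ D, x - n ∈ D) (hclp : ∀ x ∈ D, x - p ∈ D) :
    {q : ℤ × ℤ | q.1 ∈ D ∧ q.1 + n ∉ D ∧ q.2 ∉ D ∧ q.1 - p < q.2 ∧ q.2 < q.1}.ncard
      = {q : ℤ × ℤ | q.1 ∈ D ∧ q.1 + p ∉ D ∧ q.2 ∉ D ∧ q.1 - n < q.2 ∧ q.2 < q.1}.ncard := by
  classical
  have hfinTn : {x : ℤ | x ∈ D ∧ x + n ∉ D}.Finite := by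
    apply Set.Finite.subset (Set.finite_Icc (-n) M)
    rintro x ⟨hx, hxn⟩
    simp only [Set.mem_Icc]
    refine ⟨?_, hbdd x hx⟩
    by_contra hc
    push_neg at hc
    exact hxn (hneg _ (by omega))
  have hfinTp : {x : ℤ | x ∈ D ∧ x + p ∉ D}.Finite := by
    apply Set.Finite.subset (Set.finite_Icc (-p) M)
    rintro x ⟨hx, hxp⟩
    simp only [Set.mem_Icc]
    refine ⟨?_, hbdd x hx⟩
    by_contra hc
    push_neg at hc
    exact hxp (hneg _ (by omega))
  set Tn := hfinTn.toFinset with hTndef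
  set Tp := hfinTp.toFinset with hTpdef
  have hTn : ∀ x : ℤ, x ∈ Tn ↔ x ∈ D ∧ x + n ∉ D := by
    intro x; rw [hTndef, Set.Finite.mem_toFinset]; rfl
  have hTp : ∀ x : ℤ, x ∈ Tp ↔ x ∈ D ∧ x + p ∉ D := by
    intro x; rw [hTpdef, Set.Finite.mem_toFinset]; rfl
  have hid : ∀ v : ℤ, ((if v ∈ Tn then (1:ℤ) else 0) + (if v + n ∈ Tp then 1 else 0))
      = (if v ∈ Tp then 1 else 0) + (if v + p ∈ Tn then 1 else 0) := by
    intro v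
    have i1 : v + n ∈ D → v ∈ D := fun h => by have := hcln _ h; simpa using this
    have i2 : v + p ∈ D → v ∈ D := fun h => by have := hclp _ h; simpa using this
    have i3 : v + n + p ∈ D → v + n ∈ D := fun h => by have := hclp _ h; simpa using this
    have i4 : v + n + p ∈ D → v + p ∈ D := fun h => by
      have := hcln _ h
      have e : v + n + p - n = v + p := by ring
      rwa [e] at this
    have e4 : v + p + n = v + n + p := by ring
    simp only [hTn, hTp, e4]
    by_cases h1 : v ∈ D <;> by_cases h2 : v + n ∈ D <;> by_cases h3 : v + p ∈ D <;>
      by_cases h4 : v + n + p ∈ D <;> simp_all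
  have s1 := side n p hn hp D hneg M hbdd hclp Tn Tp hTn hTp
  have s2 := side p n hp hn D hneg M hbdd hcln Tp Tn hTp hTn
  rw [s1, s2]
  exact key_count n p hn hp Tn Tp hid

end SkewAux

namespace SkewAux
open YPartition

lemma exists_le (κ : YPartition) (j : ℕ) : ∃ N, κ.parts N ≤ j := by
  obtain ⟨N, hN⟩ := κ.exists_zero
  exact ⟨N, by omega⟩

/-- least index with part ≤ j -/
noncomputable def mf (κ : YPartition) (j : ℕ) : ℕ := Nat.find (exists_le κ j)

lemma parts_mf_le (κ : YPartition) (j : ℕ) : κ.parts (mf κ j) ≤ j := Nat.find_spec (exists_le κ j)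

lemma lt_mf_iff (κ : YPartition) {i j : ℕ} : i < mf κ j ↔ j < κ.parts i := by
  constructor
  · intro h
    have := Nat.find_min (exists_le κ j) h
    omega
  · intro h
    by_contra hc
    push_neg at hc
    have := le_trans (κ.antitone hc) (parts_mf_le κ j)
    omega

lemma conj_eq_mf (κ : YPartition) (j : ℕ) : κ.conj j = mf κ j := by
  have hset : {i : ℕ | j < κ.parts i} = Set.Iio (mf κ j) := by
    ext i
    simp only [Set.mem_setOf_eq, Set.mem_Iio]
    exact (lt_mf_iff κ).symm
  rw [YPartition.conj, hset, ← Finset.coe_range, Set.ncard_coe_finset, Finset.card_range]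

lemma lt_conj_iff (κ : YPartition) {i j : ℕ} : i < κ.conj j ↔ j < κ.parts i := by
  rw [conj_eq_mf]; exact lt_mf_iff κ

lemma conj_anti (κ : YPartition) {j j' : ℕ} (h : j ≤ j') : κ.conj j' ≤ κ.conj j := by
  rw [conj_eq_mf, conj_eq_mf]
  exact Nat.find_min' _ (le_trans (parts_mf_le κ j) h)

/-- the row beta numbers -/
noncomputable def ee (κ : YPartition) (i : ℕ) : ℤ := (κ.parts i : ℤ) + κ.conj 0 - 1 - i

/-- the column co-beta numbers -/
noncomputable def cc (κ : YPartition) (j : ℕ) : ℤ := (j : ℤ) + κ.conj 0 - κ.conj j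

lemma ee_strict_anti (κ : YPartition) {i i' : ℕ} (h : i < i') : ee κ i' < ee κ i := by
  have := κ.antitone (le_of_lt h)
  unfold ee
  have : (κ.parts i' : ℤ) ≤ κ.parts i := by exact_mod_cast this
  have : (i : ℤ) < i' := by exact_mod_cast h
  omega

lemma cc_mono (κ : YPartition) {j j' : ℕ} (h : j ≤ j') : cc κ j ≤ cc κ j' := by
  have h1 := conj_anti κ h
  unfold cc
  have : (κ.conj j' : ℤ) ≤ κ.conj j := by exact_mod_cast h1
  have : (j : ℤ) ≤ j' := by exact_mod_cast h
  omega

lemma cc_strict_mono (κ : YPartition) {j j' : ℕ} (h : j < j') : cc κ j < cc κ j' := by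
  have h1 := conj_anti κ (le_of_lt h)
  unfold cc
  have : (κ.conj j' : ℤ) ≤ κ.conj j := by exact_mod_cast h1
  have : (j : ℤ) < j' := by exact_mod_cast h
  omega

lemma cc_zero (κ : YPartition) : cc κ 0 = 0 := by unfold cc; omega

lemma cc_nonneg (κ : YPartition) (j : ℕ) : 0 ≤ cc κ j := by
  rw [← cc_zero κ]; exact cc_mono κ (Nat.zero_le j)

lemma cc_ge (κ : YPartition) (j : ℕ) : (j : ℤ) ≤ cc κ j := by
  unfold cc
  have : κ.conj j ≤ κ.conj 0 := conj_anti κ (Nat.zero_le j)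
  have : (κ.conj j : ℤ) ≤ κ.conj 0 := by exact_mod_cast this
  omega

lemma cell_iff_conj (κ : YPartition) {i j : ℕ} : κ.IsCell i j ↔ i < κ.conj j :=
  (lt_conj_iff κ).symm

lemma ee_ne_cc (κ : YPartition) (i j : ℕ) : ee κ i ≠ cc κ j := by
  unfold ee cc
  by_cases h : j < κ.parts i
  · have h2 : i < κ.conj j := (lt_conj_iff κ).mpr h
    have h1 : (j : ℤ) < κ.parts i := by exact_mod_cast h
    have h2 : (i : ℤ) < κ.conj j := by exact_mod_cast h2
    omega
  · push_neg at h
    have h2 : κ.conj j ≤ i := by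
      by_contra hc
      push_neg at hc
      exact absurd ((lt_conj_iff κ).mp hc) (by omega)
    have h1 : (κ.parts i : ℤ) ≤ j := by exact_mod_cast h
    have h2 : (κ.conj j : ℤ) ≤ i := by exact_mod_cast h2
    omega

lemma cell_iff_lt (κ : YPartition) {i j : ℕ} : κ.IsCell i j ↔ cc κ j < ee κ i := by
  unfold ee cc
  constructor
  · intro h
    have h2 : i < κ.conj j := (lt_conj_iff κ).mpr h
    have h1 : (j : ℤ) < κ.parts i := by exact_mod_cast h
    have h2 : (i : ℤ) < κ.conj j := by exact_mod_cast h2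
    omega
  · intro h
    by_contra hc
    have h1 : κ.parts i ≤ j := by
      unfold YPartition.IsCell at hc
      omega
    have h2 : κ.conj j ≤ i := by
      by_contra hc2
      push_neg at hc2
      exact absurd ((lt_conj_iff κ).mp hc2) (by omega)
    have h1 : (κ.parts i : ℤ) ≤ j := by exact_mod_cast h1
    have h2 : (κ.conj j : ℤ) ≤ i := by exact_mod_cast h2
    omega

lemma hook_eq (κ : YPartition) {i j : ℕ} (h : κ.IsCell i j) :
    (κ.hook i j : ℤ) = ee κ i - cc κ j := by
  have h1 : j < κ.parts i := h
  have h2 : i < κ.conj j := (lt_conj_iff κ).mpr h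
  unfold YPartition.hook ee cc
  omega

lemma ee_pos (κ : YPartition) {i : ℕ} (h : i < κ.conj 0) : 1 ≤ ee κ i := by
  have h1 : 0 < κ.parts i := (lt_conj_iff κ).mp h
  unfold ee
  have : (i : ℤ) < κ.conj 0 := by exact_mod_cast h
  have : (1 : ℤ) ≤ κ.parts i := by exact_mod_cast h1
  omega

lemma ee_neg (κ : YPartition) {i : ℕ} (h : κ.conj 0 ≤ i) : ee κ i < 0 := by
  have h1 : κ.parts i = 0 := by
    have := (lt_conj_iff κ (i := i) (j := 0))
    omega
  unfold ee
  have : (κ.conj 0 : ℤ) ≤ i := by exact_mod_cast h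
  rw [h1]
  omega

lemma ee_surj_neg (κ : YPartition) (x : ℤ) (hx : x < 0) : ∃ i, ee κ i = x := by
  refine ⟨κ.conj 0 + (-1 - x).toNat, ?_⟩
  have h1 : κ.parts (κ.conj 0 + (-1 - x).toNat) = 0 := by
    have h2 : ¬ ((κ.conj 0 + (-1 - x).toNat) < κ.conj 0) := by omega
    have := (lt_conj_iff κ (i := κ.conj 0 + (-1 - x).toNat) (j := 0))
    omega
  unfold ee
  rw [h1]
  have h3 : ((-1 - x).toNat : ℤ) = -1 - x := Int.toNat_of_nonneg (by omega)
  push_cast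
  omega

lemma totality (κ : YPartition) (x : ℤ) (hx : 0 ≤ x) :
    (∃ i, ee κ i = x) ∨ (∃ j, cc κ j = x) := by
  by_cases hc : ∃ j, cc κ j = x
  · exact Or.inr hc
  push_neg at hc
  left
  -- find max j with cc κ j ≤ x
  have hfin : ∀ j : ℕ, cc κ j ≤ x → j ≤ x.toNat := by
    intro j hj
    have := cc_ge κ j
    omega
  have hex : ∃ j : ℕ, cc κ j ≤ x ∧ x < cc κ (j + 1) := by
    by_contra hcon
    push_neg at hcon
    have : ∀ j : ℕ, cc κ j ≤ x := by
      intro j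
      induction j with
      | zero => rw [cc_zero]; exact hx
      | succ j ih => exact hcon j ih
    have := this (x.toNat + 1)
    have := hfin _ this
    omega
  obtain ⟨j, hj1, hj2⟩ := hex
  have hj1' : cc κ j < x := lt_of_le_of_ne hj1 (hc j)
  -- define i
  have hge : 0 ≤ (j : ℤ) + κ.conj 0 - x := by
    unfold cc at hj2
    have h5 : (0:ℤ) ≤ κ.conj (j+1) := by positivity
    push_cast at hj2 ⊢
    omega
  set i : ℕ := ((j : ℤ) + κ.conj 0 - x).toNat with hi
  have hiz : (i : ℤ) = (j : ℤ) + κ.conj 0 - x := Int.toNat_of_nonneg hge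
  have hlt : i < κ.conj j := by
    unfold cc at hj1'
    omega
  have hge2 : κ.conj (j+1) ≤ i := by
    unfold cc at hj2
    push_cast at hj2
    omega
  have hp1 : j < κ.parts i := (lt_conj_iff κ).mp hlt
  have hp2 : κ.parts i ≤ j + 1 := by
    by_contra hcon
    push_neg at hcon
    have : i < κ.conj (j+1) := (lt_conj_iff κ).mpr (by omega)
    omega
  have hp : κ.parts i = j + 1 := by omega
  refine ⟨i, ?_⟩
  unfold ee
  rw [hp]
  push_cast
  omega

end SkewAux

namespace SkewAux
open YPartition

lemma ee_inj (κ : YPartition) : Function.Injective (ee κ) := by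
  intro a b hab
  rcases lt_trichotomy a b with h | h | h
  · exact absurd hab (ne_of_gt (ee_strict_anti κ h))
  · exact h
  · exact absurd hab (ne_of_lt (ee_strict_anti κ h))

lemma cc_inj (κ : YPartition) : Function.Injective (cc κ) := by
  intro a b hab
  rcases lt_trichotomy a b with h | h | h
  · exact absurd hab (ne_of_lt (cc_strict_mono κ h))
  · exact h
  · exact absurd hab (ne_of_gt (cc_strict_mono κ h))

lemma colHooks_iff (κ : YPartition) (h : ℕ) :
    h ∈ κ.colHooks 0 ↔ ∃ i, ee κ i = (h : ℤ) := by
  constructor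
  · rintro ⟨i, hcell, hh⟩
    refine ⟨i, ?_⟩
    have h2 := hook_eq κ hcell
    rw [cc_zero] at h2
    rw [hh] at h2
    omega
  · rintro ⟨i, hi⟩
    have hnn : (0:ℤ) ≤ (h:ℤ) := by positivity
    have hir : i < κ.conj 0 := by
      by_contra hc
      push_neg at hc
      have := ee_neg κ hc
      omega
    have hcell : κ.IsCell i 0 := (lt_conj_iff κ).mp hir
    refine ⟨i, hcell, ?_⟩
    have h2 := hook_eq κ hcell
    rw [cc_zero] at h2
    omega

lemma nrow_iff (κ : YPartition) (n i : ℕ) :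
    κ.IsNRow n i ↔ (i < κ.conj 0 ∧ ¬ ∃ i', ee κ i' = ee κ i + n) := by
  constructor
  · rintro ⟨h1, h2⟩
    have h1' : i < κ.conj 0 := (cell_iff_conj κ).mp h1
    refine ⟨h1', ?_⟩
    rintro ⟨i', hi'⟩
    apply h2
    rw [colHooks_iff]
    refine ⟨i', ?_⟩
    have h3 := hook_eq κ h1
    rw [cc_zero] at h3
    push_cast
    omega
  · rintro ⟨h1, h2⟩
    refine ⟨(cell_iff_conj κ).mpr h1, ?_⟩
    rw [colHooks_iff]
    rintro ⟨i', hi'⟩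
    apply h2
    refine ⟨i', ?_⟩
    have h3 := hook_eq κ ((cell_iff_conj κ).mpr h1)
    rw [cc_zero] at h3
    push_cast at hi'
    omega

lemma core_closure (κ : YPartition) {n : ℕ} (hn : 1 ≤ n) (hcore : YPartition.IsCore n κ) :
    ∀ x ∈ Set.range (ee κ), x - (n : ℤ) ∈ Set.range (ee κ) := by
  rintro x ⟨i, rfl⟩
  by_cases hneg2 : ee κ i - (n:ℤ) < 0
  · obtain ⟨i', hi'⟩ := ee_surj_neg κ _ hneg2
    exact ⟨i', hi'⟩
  · push_neg at hneg2
    rcases totality κ (ee κ i - n) hneg2 with ⟨i', hi'⟩ | ⟨j, hj⟩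
    · exact ⟨i', hi'⟩
    · exfalso
      have hn' : (1:ℤ) ≤ (n:ℤ) := by exact_mod_cast hn
      have hcell : κ.IsCell i j := (cell_iff_lt κ).mpr (by omega)
      have hhook := hook_eq κ hcell
      apply hcore i j hcell
      omega

lemma transport (κ : YPartition) (m q : ℕ) :
    {c : ℕ × ℕ | κ.IsCell c.1 c.2 ∧ κ.IsNRow m c.1 ∧ κ.hook c.1 c.2 < q}.ncard
      = {z : ℤ × ℤ | z.1 ∈ Set.range (ee κ) ∧ z.1 + (m:ℤ) ∉ Set.range (ee κ)
          ∧ z.2 ∉ Set.range (ee κ) ∧ z.1 - (q:ℤ) < z.2 ∧ z.2 < z.1}.ncard := by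
  classical
  set φ : ℕ × ℕ → ℤ × ℤ := fun c => (ee κ c.1, cc κ c.2) with hφ
  have hinj : Set.InjOn φ {c : ℕ × ℕ | κ.IsCell c.1 c.2 ∧ κ.IsNRow m c.1 ∧ κ.hook c.1 c.2 < q} := by
    intro a _ b _ hab
    simp only [hφ, Prod.mk.injEq] at hab
    exact Prod.ext (ee_inj κ hab.1) (cc_inj κ hab.2)
  have himg : φ '' {c : ℕ × ℕ | κ.IsCell c.1 c.2 ∧ κ.IsNRow m c.1 ∧ κ.hook c.1 c.2 < q}
      = {z : ℤ × ℤ | z.1 ∈ Set.range (ee κ) ∧ z.1 + (m:ℤ) ∉ Set.range (ee κ)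
          ∧ z.2 ∉ Set.range (ee κ) ∧ z.1 - (q:ℤ) < z.2 ∧ z.2 < z.1} := by
    ext z
    constructor
    · rintro ⟨⟨i, j⟩, ⟨hcell, hrow, hhk⟩, rfl⟩
      dsimp only at hcell hrow hhk ⊢
      obtain ⟨hrow1, hrow2⟩ := (nrow_iff κ m i).mp hrow
      have h3 := hook_eq κ hcell
      have hq : ((κ.hook i j : ℕ) : ℤ) < (q : ℤ) := by exact_mod_cast hhk
      simp only [hφ, Set.mem_setOf_eq]
      refine ⟨⟨i, rfl⟩, ?_, ?_, by omega, (cell_iff_lt κ).mp hcell⟩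
      · rintro ⟨i', hi'⟩
        exact hrow2 ⟨i', hi'⟩
      · rintro ⟨i', hi'⟩
        exact ee_ne_cc κ i' j hi'
    · rintro ⟨⟨i, hi⟩, h2, h3, h4, h5⟩
      have hz2 : 0 ≤ z.2 := by
        by_contra hc
        push_neg at hc
        obtain ⟨i', hi'⟩ := ee_surj_neg κ z.2 hc
        exact h3 ⟨i', hi'⟩
      rcases totality κ z.2 hz2 with hmem | ⟨j, hj⟩
      · exact absurd hmem h3
      · have hcell : κ.IsCell i j := (cell_iff_lt κ).mpr (by omega)
        have hhook := hook_eq κ hcell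
        refine ⟨(i, j), ⟨hcell, ?_, ?_⟩, ?_⟩
        · rw [nrow_iff]
          have hir : i < κ.conj 0 := by
            by_contra hc
            push_neg at hc
            have := ee_neg κ hc
            omega
          refine ⟨hir, ?_⟩
          rintro ⟨i', hi'⟩
          exact h2 ⟨i', by rw [hi', hi]⟩
        · have : (κ.hook i j : ℤ) < (q : ℤ) := by omega
          exact_mod_cast this
        · simp only [hφ]
          rw [hi, hj]
  rw [← himg, Set.ncard_image_of_injOn hinj]

end SkewAux

/-- The skew length of an `n,p`-core is symmetric in `n` and `p`: the number
of cells in `n`-rows with hook length less than `p` equals the number of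
cells in `p`-rows with hook length less than `n`. -/
theorem stmt5 (n p : ℕ) (hn : 1 ≤ n) (hp : 1 ≤ p) (κ : YPartition)
    (hκn : YPartition.IsCore n κ) (hκp : YPartition.IsCore p κ) :
    Set.ncard {c : ℕ × ℕ | κ.IsCell c.1 c.2 ∧ κ.IsNRow n c.1 ∧ κ.hook c.1 c.2 < p}
      = Set.ncard {c : ℕ × ℕ | κ.IsCell c.1 c.2 ∧ κ.IsNRow p c.1 ∧ κ.hook c.1 c.2 < n} := by
  classical
  have hnz : (0:ℤ) < (n:ℤ) := by exact_mod_cast hn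
  have hpz : (0:ℤ) < (p:ℤ) := by exact_mod_cast hp
  have hneg : ∀ x : ℤ, x < 0 → x ∈ Set.range (SkewAux.ee κ) := by
    intro x hx
    obtain ⟨i, hi⟩ := SkewAux.ee_surj_neg κ x hx
    exact ⟨i, hi⟩
  have hbdd : ∀ x ∈ Set.range (SkewAux.ee κ), x ≤ SkewAux.ee κ 0 := by
    rintro x ⟨i, rfl⟩
    rcases Nat.eq_zero_or_pos i with h | h
    · rw [h]
    · exact le_of_lt (SkewAux.ee_strict_anti κ h)
  rw [SkewAux.transport κ n p, SkewAux.transport κ p n]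
  exact SkewAux.abstract (n:ℤ) (p:ℤ) hnz hpz _ hneg _ hbdd
    (SkewAux.core_closure κ hn hκn) (SkewAux.core_closure κ hp hκp)
end

section
/- For an affine permutation ω on n letters and indices 1 ≤ i < j ≤ n, define k_{i,j}(ω) = |⌊(ω^{-1}(j) − ω^{-1}(i))/n⌋|. Then the total number of affine inversions of ω (pairs (a,b) ∈ [n] × ℕ with a < b and ω(a) > ω(b)) equals ∑_{i<j} k_{i,j}(ω). -/
/-!
Inversions of `ω` are invariant under the diagonal shift `(a, b) ↦ (a + n, b + n)`, so any
fundamental domain of the shift counts them. Replacing the condition `a ∈ [1, n]` by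
`ω(a) ∈ [1, n]` and applying `ω` to both entries, they become the pairs `(x, v)` with
`x ∈ [1, n]`, `v < x` and `ω⁻¹(x) < ω⁻¹(v)`. Writing `v = y + m n` with `y ∈ [1, n]`, the
residue pair `(x, y)` contributes the number of `m` with `ω⁻¹(x) − ω⁻¹(y) < m n < x − y`.
For `x < y` only one of `(x, y)`, `(y, x)` can contribute, and as `n ∤ ω⁻¹(y) − ω⁻¹(x)` the two
together give `|⌊(ω⁻¹(y) − ω⁻¹(x))/n⌋|`.
-/

/-- The affine symmetric group on `n` letters: bijections `ω : ℤ → ℤ` with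
`ω(i+n) = ω(i) + n` for all `i` and `ω(1) + ⋯ + ω(n) = n(n+1)/2`. -/
structure AffinePerm (n : ℕ) where
  toFun : ℤ → ℤ
  bijective : Function.Bijective toFun
  shift : ∀ i : ℤ, toFun (i + n) = toFun i + n
  sum_window : ∑ i ∈ Finset.Icc (1 : ℤ) (n : ℤ), toFun i = n * (n + 1) / 2

namespace Int

theorem eq_zero_of_mem_Ico_of_add_mul_mem_Ico {n a x k : ℤ} (hx : x ∈ Set.Ico a (a + n))
    (hxk : x + k * n ∈ Set.Ico a (a + n)) : k = 0 := by
  obtain ⟨hx₁, hx₂⟩ := hx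
  obtain ⟨hxk₁, hxk₂⟩ := hxk
  rcases lt_trichotomy k 0 with h | h | h
  · nlinarith
  · exact h
  · nlinarith

theorem mem_Ioc_ediv_iff {n c d m : ℤ} (hn : 0 < n) :
    m ∈ Finset.Ioc (c / n) ((d - 1) / n) ↔ c < m * n ∧ m * n < d := by
  rw [Finset.mem_Ioc, Int.ediv_lt_iff_lt_mul hn, Int.le_ediv_iff_mul_le hn]
  omega

theorem card_Ioc_ediv_add_card_Ioc_ediv {n x y u v : ℤ} (hn : 0 < n) (hxy : x < y)
    (hyx : y < x + n) (huv : ¬ n ∣ v - u) :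
    (Finset.Ioc ((u - v) / n) ((x - y - 1) / n)).card
      + (Finset.Ioc ((v - u) / n) ((y - x - 1) / n)).card = ((v - u) / n).natAbs := by
  have h₁ : (x - y - 1) / n = -1 :=
    le_antisymm ((Int.ediv_le_iff_le_mul hn).2 (by omega))
      ((Int.le_ediv_iff_mul_le hn).2 (by omega))
  have h₂ : (y - x - 1) / n = 0 := Int.ediv_eq_zero_of_lt (by omega) (by omega)
  have h₃ : (u - v) / n = -((v - u) / n) - 1 := by
    rw [← neg_sub, Int.neg_ediv, if_neg huv, Int.sign_eq_one_of_pos hn]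
  rw [Int.card_Ioc, Int.card_Ioc, h₁, h₂, h₃]
  omega

end Int

theorem Finset.sum_sum_eq_sum_sum_ite_lt {α M : Type*} [LinearOrder α] [AddCommMonoid M]
    (s : Finset α) (f : α → α → M) (hf : ∀ x ∈ s, f x x = 0) :
    ∑ x ∈ s, ∑ y ∈ s, f x y = ∑ x ∈ s, ∑ y ∈ s, if x < y then f x y + f y x else 0 := by
  have hsplit : ∀ x ∈ s, ∀ y ∈ s,
      f x y = (if x < y then f x y else 0) + if y < x then f x y else 0 := by
    intro x hx y _
    rcases lt_trichotomy x y with h | rfl | h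
    · simp [h, h.not_gt]
    · simp [hf x hx]
    · simp [h, h.not_gt]
  calc ∑ x ∈ s, ∑ y ∈ s, f x y
      = ∑ x ∈ s, ∑ y ∈ s, ((if x < y then f x y else 0) + if y < x then f x y else 0) :=
        Finset.sum_congr rfl fun x hx => Finset.sum_congr rfl (hsplit x hx)
    _ = (∑ x ∈ s, ∑ y ∈ s, if x < y then f x y else 0)
          + ∑ x ∈ s, ∑ y ∈ s, if y < x then f x y else 0 := by
        simp only [Finset.sum_add_distrib]
    _ = (∑ x ∈ s, ∑ y ∈ s, if x < y then f x y else 0)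
          + ∑ x ∈ s, ∑ y ∈ s, if x < y then f y x else 0 := by
        rw [Finset.sum_comm (f := fun x y => if y < x then f x y else 0)]
    _ = ∑ x ∈ s, ∑ y ∈ s, if x < y then f x y + f y x else 0 := by
        rw [← Finset.sum_add_distrib]
        refine Finset.sum_congr rfl fun x _ => ?_
        rw [← Finset.sum_add_distrib]
        refine Finset.sum_congr rfl fun y _ => ?_
        split_ifs <;> simp

def ShiftEquivariant (n : ℤ) (f : ℤ → ℤ) : Prop :=
  ∀ t k : ℤ, f (t + k * n) = f t + k * n

def inversions (f : ℤ → ℤ) : Set (ℤ × ℤ) :=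
  {p | p.1 < p.2 ∧ f p.2 < f p.1}

theorem AffinePerm.shiftEquivariant {n : ℕ} (ω : AffinePerm n) :
    ShiftEquivariant n ω.toFun := by
  intro t k
  induction k using Int.induction_on with
  | zero => simp
  | succ k ih => rw [add_one_mul, ← add_assoc, ω.shift, ih, add_assoc]
  | pred k ih =>
    have h := ω.shift (t + (-k - 1) * n)
    rw [show t + (-k - 1) * n + n = t + -k * n by ring, ih] at h
    linarith

namespace ShiftEquivariant

variable {n : ℤ} {f g : ℤ → ℤ}

theorem of_inverse (hf : ShiftEquivariant n f) (h1 : Function.LeftInverse g f)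
    (h2 : Function.RightInverse g f) : ShiftEquivariant n g := by
  intro t k
  rw [← h1 (g t + k * n), hf, h2]

theorem add_mul_mem_inversions_iff (hf : ShiftEquivariant n f) (p : ℤ × ℤ) (k : ℤ) :
    (p.1 + k * n, p.2 + k * n) ∈ inversions f ↔ p ∈ inversions f := by
  simp [inversions, hf p.1 k, hf p.2 k]

theorem eq_of_dvd_sub {a : ℤ} (hg : ShiftEquivariant n g) (hinj : Function.Injective g)
    {x y : ℤ} (hx : x ∈ Set.Ico a (a + n)) (hy : y ∈ Set.Ico a (a + n))
    (hdvd : n ∣ g y - g x) : x = y := by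
  obtain ⟨c, hc⟩ := hdvd
  have hyx : y = x + c * n := hinj (by rw [hg]; linarith)
  rw [hyx] at hy ⊢
  simp [Int.eq_zero_of_mem_Ico_of_add_mul_mem_Ico hx hy]

end ShiftEquivariant

theorem ncard_sep_apply_mem_Ico_eq {n : ℤ} (hn : 0 < n) (a : ℤ) {J : Set (ℤ × ℤ)}
    (hJ : ∀ (p : ℤ × ℤ) (k : ℤ), (p.1 + k * n, p.2 + k * n) ∈ J ↔ p ∈ J)
    {f : ℤ → ℤ} (hf : ShiftEquivariant n f) :
    {p ∈ J | f p.1 ∈ Set.Ico a (a + n)}.ncard = {p ∈ J | p.1 ∈ Set.Ico a (a + n)}.ncard := by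
  have hmem : ∀ t, t + -toIcoDiv hn a t * n ∈ Set.Ico a (a + n) := fun t => by
    simpa [sub_eq_add_neg] using sub_toIcoDiv_zsmul_mem_Ico hn a t
  refine Set.ncard_congr
    (fun p _ => (p.1 + -toIcoDiv hn a p.1 * n, p.2 + -toIcoDiv hn a p.1 * n)) ?_ ?_ ?_
  · rintro p ⟨hpJ, -⟩
    exact ⟨(hJ p _).2 hpJ, hmem p.1⟩
  · rintro p q ⟨-, hp⟩ ⟨-, hq⟩ hpq
    obtain ⟨h₁, h₂⟩ := Prod.mk.inj hpq
    have hq₁ : q.1 = p.1 + (toIcoDiv hn a q.1 - toIcoDiv hn a p.1) * n := by linarith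
    rw [hq₁, hf] at hq
    have hk : toIcoDiv hn a q.1 = toIcoDiv hn a p.1 := by
      linarith [Int.eq_zero_of_mem_Ico_of_add_mul_mem_Ico hp hq]
    rw [hk] at h₁ h₂
    exact Prod.ext (by linarith) (by linarith)
  · rintro q ⟨hqJ, hq⟩
    set c := toIcoDiv hn a (f q.1)
    have hc : toIcoDiv hn a (q.1 + -c * n) = -c := by
      have hq₀ : toIcoDiv hn a q.1 = 0 := (toIcoDiv_eq_iff hn).2 (by simpa using hq)
      rw [← smul_eq_mul, toIcoDiv_add_zsmul, hq₀, zero_add]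
    refine ⟨(q.1 + -c * n, q.2 + -c * n), ⟨(hJ q _).2 hqJ, ?_⟩, ?_⟩
    · rw [hf]
      exact hmem (f q.1)
    · simp only [hc]
      ext <;> ring

theorem image_prodMap_sep_inversions {f g : ℤ → ℤ} (h1 : Function.LeftInverse g f)
    (h2 : Function.RightInverse g f) (W : Set ℤ) :
    Prod.map f f '' {p ∈ inversions f | f p.1 ∈ W}
      = {q | q.1 ∈ W ∧ (q.2, q.1) ∈ inversions g} := by
  rw [Set.image_eq_preimage_of_inverse (h1.prodMap h1) (h2.prodMap h2)]
  ext ⟨u, v⟩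
  simp only [inversions, Set.mem_ofPred_eq, Set.preimage_ofPred_eq, Prod.map_fst,
    Prod.map_snd, h2 u, h2 v]
  tauto

theorem ncard_mem_Ico_eq_sum_sum_card {n : ℤ} (hn : 0 < n) (a : ℤ) (P : ℤ → ℤ → Prop)
    (M : ℤ → ℤ → Finset ℤ) (hM : ∀ x y m, m ∈ M x y ↔ P x (y + m * n)) :
    {p : ℤ × ℤ | p.1 ∈ Set.Ico a (a + n) ∧ P p.1 p.2}.ncard
      = ∑ x ∈ Finset.Ico a (a + n), ∑ y ∈ Finset.Ico a (a + n), (M x y).card := by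
  set W := Finset.Ico a (a + n)
  have hset : {p : ℤ × ℤ | p.1 ∈ Set.Ico a (a + n) ∧ P p.1 p.2}
      = ((W ×ˢ W).sigma fun r => M r.1 r.2).image fun s => (s.1.1, s.1.2 + s.2 * n) := by
    ext ⟨u, v⟩
    simp only [Set.mem_ofPred_eq, Finset.coe_image, Set.mem_image, Finset.mem_coe,
      Finset.mem_sigma, Finset.mem_product, W, Finset.mem_Ico, hM, Sigma.exists, Prod.mk.injEq]
    constructor
    · rintro ⟨hu, hP⟩
      have hv : toIcoMod hn a v + toIcoDiv hn a v * n = v := toIcoMod_add_toIcoDiv_zsmul hn a v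
      exact ⟨(u, toIcoMod hn a v), toIcoDiv hn a v,
        ⟨⟨hu, toIcoMod_mem_Ico hn a v⟩, by rwa [hv]⟩, rfl, hv⟩
    · rintro ⟨⟨x, y⟩, m, ⟨⟨hx, -⟩, hP⟩, rfl, rfl⟩
      exact ⟨hx, hP⟩
  rw [hset, Set.ncard_coe_finset, Finset.card_image_of_injOn, Finset.card_sigma,
    Finset.sum_product]
  rintro ⟨⟨x, y⟩, m⟩ hs ⟨⟨x', y'⟩, m'⟩ hs' h
  simp only [Finset.coe_sigma, Set.mem_sigma_iff, Finset.coe_product, Set.mem_prod,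
    Finset.coe_Ico, W] at hs hs'
  obtain ⟨rfl, hy⟩ := Prod.mk.inj h
  have hy' : y' + (m' - m) * n = y := by linarith
  have hm := Int.eq_zero_of_mem_Ico_of_add_mul_mem_Ico hs'.1.2 (hy' ▸ hs.1.2)
  obtain rfl : m' = m := by linarith
  obtain rfl : y' = y := by linarith
  rfl

theorem ShiftEquivariant.ncard_swap_mem_inversions_eq_sum_sum {n : ℤ} (hn : 0 < n) (a : ℤ)
    {g : ℤ → ℤ} (hg : ShiftEquivariant n g) (hinj : Function.Injective g) :
    {q : ℤ × ℤ | q.1 ∈ Set.Ico a (a + n) ∧ (q.2, q.1) ∈ inversions g}.ncard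
      = ∑ x ∈ Finset.Ico a (a + n), ∑ y ∈ Finset.Ico a (a + n),
          if x < y then ((g y - g x) / n).natAbs else 0 := by
  have hM : ∀ x y m, m ∈ Finset.Ioc ((g x - g y) / n) ((x - y - 1) / n)
      ↔ (y + m * n, x) ∈ inversions g := fun x y m => by
    rw [Int.mem_Ioc_ediv_iff hn]
    simp only [inversions, Set.mem_ofPred_eq, hg y m]
    omega
  have hdiag : ∀ x ∈ Finset.Ico a (a + n),
      (Finset.Ioc ((g x - g x) / n) ((x - x - 1) / n)).card = 0 := fun x _ => by
    rw [sub_self, sub_self, Int.zero_ediv, Finset.Ioc_eq_empty_of_le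
      (Int.ediv_neg_of_neg_of_pos (by omega) hn).le, Finset.card_empty]
  rw [ncard_mem_Ico_eq_sum_sum_card hn a (fun x v => (v, x) ∈ inversions g) _ hM,
    Finset.sum_sum_eq_sum_sum_ite_lt _ _ hdiag]
  refine Finset.sum_congr rfl fun x hx => Finset.sum_congr rfl fun y hy => ?_
  replace hx := Set.mem_Ico.2 (Finset.mem_Ico.1 hx)
  replace hy := Set.mem_Ico.2 (Finset.mem_Ico.1 hy)
  split_ifs with hxy
  · exact Int.card_Ioc_ediv_add_card_Ioc_ediv hn hxy (by linarith [hy.2, hx.1])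
      fun hdvd => hxy.ne (hg.eq_of_dvd_sub hinj hx hy hdvd)
  · rfl

/-- The number of affine inversions of ω, i.e. of pairs (a,b) ∈ [n] × ℕ with
a < b and ω(a) > ω(b), equals ∑_{i<j} k_{i,j}(ω), where
k_{i,j}(ω) = |⌊(ω⁻¹(j) − ω⁻¹(i))/n⌋|. -/
theorem stmt14 (n : ℕ) (hn : 0 < n) (ω : AffinePerm n) (winv : ℤ → ℤ)
    (h1 : Function.LeftInverse winv ω.toFun)
    (h2 : Function.RightInverse winv ω.toFun) :
    Set.ncard {ab : ℤ × ℤ | 1 ≤ ab.1 ∧ ab.1 ≤ (n : ℤ) ∧ ab.1 < ab.2 ∧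
        ω.toFun ab.2 < ω.toFun ab.1}
      = ∑ i ∈ Finset.Icc (1 : ℤ) (n : ℤ), ∑ j ∈ Finset.Icc (1 : ℤ) (n : ℤ),
          if i < j then ((winv j - winv i) / (n : ℤ)).natAbs else 0 := by
  have hn' : (0 : ℤ) < n := by exact_mod_cast hn
  have hω := ω.shiftEquivariant
  have hW : Finset.Icc (1 : ℤ) n = Finset.Ico (1 : ℤ) (1 + n) := by
    rw [add_comm, Finset.Ico_add_one_right_eq_Icc]
  calc _ = {p ∈ inversions ω.toFun | p.1 ∈ Set.Ico 1 (1 + (n : ℤ))}.ncard := by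
        congr 1
        ext
        simp only [inversions, Set.mem_ofPred_eq, Set.mem_Ico]
        omega
    _ = {p ∈ inversions ω.toFun | ω.toFun p.1 ∈ Set.Ico 1 (1 + (n : ℤ))}.ncard :=
        (ncard_sep_apply_mem_Ico_eq hn' 1 hω.add_mul_mem_inversions_iff hω).symm
    _ = {q : ℤ × ℤ | q.1 ∈ Set.Ico 1 (1 + (n : ℤ)) ∧ (q.2, q.1) ∈ inversions winv}.ncard := by
        rw [← image_prodMap_sep_inversions h1 h2,
          Set.ncard_image_of_injective _ (h1.injective.prodMap h1.injective)]
    _ = _ := by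
        rw [(hω.of_inverse h1 h2).ncard_swap_mem_inversions_eq_sum_sum hn' 1 h2.injective, hW]
end

section
/- Let ω be a dominant affine permutation on n letters (i.e., ω^{-1} is Graßmannian: ω^{-1}(1) < ⋯ < ω^{-1}(n)). For 1 ≤ i < j ≤ n, k_{i,j}(ω) = |⌊(ω^{-1}(j) − ω^{-1}(i))/n⌋| equals the number of affine inversions (a,b) of ω with ω(a) ≡ i (mod n) and ω(b) ≡ j (mod n). -/
open Function

def affineInversionsBetween (f : ℤ → ℤ) (n i j : ℤ) : Set (ℤ × ℤ) :=
  {ab | 1 ≤ ab.1 ∧ ab.1 ≤ n ∧ ab.1 < ab.2 ∧ f ab.2 < f ab.1 ∧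
    f ab.1 ≡ i [ZMOD n] ∧ f ab.2 ≡ j [ZMOD n]}

theorem Int.eq_of_modEq_of_one_le_of_le {n a b : ℤ} (h : a ≡ b [ZMOD n])
    (ha₁ : 1 ≤ a) (ha₂ : a ≤ n) (hb₁ : 1 ≤ b) (hb₂ : b ≤ n) : a = b :=
  (sub_eq_zero.1 (Int.eq_zero_of_abs_lt_dvd h.dvd (abs_lt.2 ⟨by linarith, by linarith⟩))).symm

theorem Int.exists_modEq_of_one_le_of_le {n : ℤ} (hn : 0 < n) (u : ℤ) :
    ∃ a, 1 ≤ a ∧ a ≤ n ∧ a ≡ u [ZMOD n] := by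
  obtain ⟨z, hz₀, hzn, hz⟩ := Int.existsUnique_equiv (u - 1) hn
  exact ⟨z + 1, by linarith, by linarith, by simpa using hz.add_right 1⟩

theorem Int.ncard_setOf_modEq_pos_lt_sub {n c D : ℤ} (hn : 0 < n) (hc₀ : 0 < c) (hcn : c < n)
    (hD : ¬ n ∣ D) :
    {e : ℤ | e ≡ D [ZMOD n] ∧ 0 < e ∧ e < D - c}.ncard = (D / n).toNat := by
  have hset : {e : ℤ | e ≡ D [ZMOD n] ∧ 0 < e ∧ e < D - c}
      = (fun d => D - d * n) '' Set.Icc 1 (D / n) := by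
    ext e
    simp only [Set.mem_ofPred_eq, Set.mem_image, Set.mem_Icc]
    constructor
    · rintro ⟨he, he₀, heD⟩
      obtain ⟨d, hd⟩ := he.dvd
      refine ⟨d, ⟨?_, (Int.le_ediv_iff_mul_le hn).2 (by linarith)⟩, by linarith⟩
      by_contra! hd₁
      nlinarith
    · rintro ⟨d, ⟨hd₁, hdD⟩, rfl⟩
      have hdn : d * n ≤ D := (Int.le_ediv_iff_mul_le hn).1 hdD
      have hdn' : d * n ≠ D := fun h => hD ⟨d, by linarith⟩
      refine ⟨Int.modEq_iff_dvd.2 ⟨d, by ring⟩, by omega, by nlinarith⟩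
  have hinj : Injective fun d : ℤ => D - d * n :=
    fun _ _ h => mul_right_cancel₀ hn.ne' (sub_right_injective h)
  rw [hset, Set.ncard_image_of_injective _ hinj, ← Finset.coe_Icc, Set.ncard_coe_finset,
    Int.card_Icc, add_sub_cancel_right]

section ShiftEquivariant

variable {n : ℤ} {f g : ℤ → ℤ}

theorem map_add_mul_of_map_add (hf : ∀ x, f (x + n) = f x + n) (x t : ℤ) :
    f (x + t * n) = f x + t * n := by
  simpa using AddConstMapClass.map_add_zsmul (⟨f, hf⟩ : AddConstMap ℤ ℤ n n) x t

theorem map_sub_self_eq_of_modEq (hf : ∀ x, f (x + n) = f x + n) {a b : ℤ}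
    (h : a ≡ b [ZMOD n]) : f a - a = f b - b := by
  obtain ⟨t, ht⟩ := h.dvd
  obtain rfl : b = a + t * n := by linarith [mul_comm n t]
  rw [map_add_mul_of_map_add hf]
  ring

theorem map_modEq_of_modEq (hf : ∀ x, f (x + n) = f x + n) {a b : ℤ}
    (h : a ≡ b [ZMOD n]) : f a ≡ f b [ZMOD n] :=
  calc f a = a + (f b - b) := by linarith [map_sub_self_eq_of_modEq hf h]
    _ ≡ b + (f b - b) [ZMOD n] := h.add_right _
    _ = f b := by ring

theorem map_add_of_inverse (hf : ∀ x, f (x + n) = f x + n) (hgf : LeftInverse g f)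
    (hfg : RightInverse g f) (x : ℤ) : g (x + n) = g x + n := by
  rw [← hgf (g x + n), hf, hfg]

theorem map_eq_add_of_modEq_inverse (hf : ∀ x, f (x + n) = f x + n) (hfg : RightInverse g f)
    {a i : ℤ} (h : a ≡ g i [ZMOD n]) : f a = a + (i - g i) := by
  linarith [map_sub_self_eq_of_modEq hf h, hfg i]

theorem map_modEq_iff (hf : ∀ x, f (x + n) = f x + n) (hgf : LeftInverse g f)
    (hfg : RightInverse g f) {a i : ℤ} : f a ≡ i [ZMOD n] ↔ a ≡ g i [ZMOD n] := by
  constructor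
  · intro h
    simpa only [hgf a] using map_modEq_of_modEq (map_add_of_inverse hf hgf hfg) h
  · intro h
    simpa only [hfg i] using map_modEq_of_modEq hf h

theorem not_dvd_inverse_sub (hf : ∀ x, f (x + n) = f x + n) (hfg : RightInverse g f)
    {i j : ℤ} (hij : 0 < j - i) (hjn : j - i < n) : ¬ n ∣ g j - g i := by
  intro h
  have hmod := map_modEq_of_modEq hf (Int.modEq_iff_dvd.2 h)
  rw [hfg i, hfg j] at hmod
  exact hij.ne' (Int.eq_zero_of_dvd_of_nonneg_of_lt hij.le hjn hmod.dvd)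

theorem affineInversionsBetween_eq_image (hf : ∀ x, f (x + n) = f x + n)
    (hgf : LeftInverse g f) (hfg : RightInverse g f) {a₀ i j : ℤ} (ha₁ : 1 ≤ a₀) (ha₂ : a₀ ≤ n)
    (ha : a₀ ≡ g i [ZMOD n]) :
    affineInversionsBetween f n i j = (fun e => (a₀, a₀ + e)) ''
      {e | e ≡ g j - g i [ZMOD n] ∧ 0 < e ∧ e < g j - g i - (j - i)} := by
  ext ⟨a, b⟩
  simp only [affineInversionsBetween, Set.mem_ofPred_eq, Set.mem_image, Prod.mk.injEq,
    map_modEq_iff hf hgf hfg]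
  constructor
  · rintro ⟨ha₁', ha₂', hab, hba, hai, hbj⟩
    obtain rfl : a₀ = a := Int.eq_of_modEq_of_one_le_of_le (ha.trans hai.symm) ha₁ ha₂ ha₁' ha₂'
    refine ⟨b - a₀, ⟨hbj.sub hai, by linarith, ?_⟩, rfl, by ring⟩
    rw [map_eq_add_of_modEq_inverse hf hfg hai, map_eq_add_of_modEq_inverse hf hfg hbj] at hba
    linarith
  · rintro ⟨e, ⟨he, he₀, heD⟩, rfl, rfl⟩
    have hb : a₀ + e ≡ g j [ZMOD n] := by simpa using ha.add he
    refine ⟨ha₁, ha₂, by linarith, ?_, ha, hb⟩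
    rw [map_eq_add_of_modEq_inverse hf hfg ha, map_eq_add_of_modEq_inverse hf hfg hb]
    linarith

end ShiftEquivariant

/-- For dominant ω (ω⁻¹ Graßmannian) and 1 ≤ i < j ≤ n,
k_{i,j}(ω) = |⌊(ω⁻¹(j) − ω⁻¹(i))/n⌋| equals the number of affine inversions
(a,b) of ω with ω(a) ≡ i and ω(b) ≡ j modulo n. -/
theorem stmt15 (n : ℕ) (hn : 0 < n) (ω : AffinePerm n) (winv : ℤ → ℤ)
    (h1 : Function.LeftInverse winv ω.toFun)
    (h2 : Function.RightInverse winv ω.toFun)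
    (hdom : ∀ i j : ℤ, 1 ≤ i → i < j → j ≤ (n : ℤ) → winv i < winv j) :
    ∀ i j : ℤ, 1 ≤ i → i < j → j ≤ (n : ℤ) →
      ((winv j - winv i) / (n : ℤ)).natAbs
        = Set.ncard {ab : ℤ × ℤ | 1 ≤ ab.1 ∧ ab.1 ≤ (n : ℤ) ∧ ab.1 < ab.2 ∧
            ω.toFun ab.2 < ω.toFun ab.1 ∧
            ω.toFun ab.1 ≡ i [ZMOD (n : ℤ)] ∧ ω.toFun ab.2 ≡ j [ZMOD (n : ℤ)]} := by
  intro i j hi hij hjn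
  have hN : (0 : ℤ) < n := by exact_mod_cast hn
  obtain ⟨a₀, ha₁, ha₂, ha⟩ := Int.exists_modEq_of_one_le_of_le hN (winv i)
  have hquot : 0 ≤ (winv j - winv i) / n :=
    Int.ediv_nonneg (sub_nonneg.2 (hdom i j hi hij hjn).le) hN.le
  change _ = (affineInversionsBetween ω.toFun n i j).ncard
  rw [affineInversionsBetween_eq_image ω.shift h1 h2 ha₁ ha₂ ha,
    Set.ncard_image_of_injective _ fun _ _ h => add_left_cancel (congrArg Prod.snd h),
    Int.ncard_setOf_modEq_pos_lt_sub hN (by linarith) (by linarith)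
      (not_dvd_inverse_sub ω.shift h2 (by linarith) (by linarith))]
  omega
end

section
/- For an affine permutation ω on n letters and 1 ≤ i < j ≤ n, the inversion table satisfies k_{n+1−j, n+1−i}(ω*) = k_{i,j}(ω), where ω*(i) = 1 − ω(1−i) is the involutive automorphism; i.e., the inversion table of ω* is the transpose of the inversion table of ω. -/
def astar (f : ℤ → ℤ) : ℤ → ℤ := fun i => 1 - f (1 - i)

/-- The inversion table of ω* is the transpose of the inversion table of ω:
k_{n+1−j, n+1−i}(ω*) = k_{i,j}(ω) for 1 ≤ i < j ≤ n, where
k_{i,j}(ω) = |⌊(ω⁻¹(j) − ω⁻¹(i))/n⌋|. -/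
theorem stmt16 (n : ℕ) (hn : 0 < n) (ω : AffinePerm n) (winv sinv : ℤ → ℤ)
    (h1 : Function.LeftInverse winv ω.toFun)
    (h2 : Function.RightInverse winv ω.toFun)
    (h3 : Function.LeftInverse sinv (astar ω.toFun))
    (h4 : Function.RightInverse sinv (astar ω.toFun)) :
    ∀ i j : ℤ, 1 ≤ i → i < j → j ≤ (n : ℤ) →
      ((sinv ((n : ℤ) + 1 - i) - sinv ((n : ℤ) + 1 - j)) / (n : ℤ)).natAbs
        = ((winv j - winv i) / (n : ℤ)).natAbs := by
  have hsinv : ∀ x : ℤ, sinv x = 1 - winv (1 - x) := by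
    intro x
    have hx : astar ω.toFun (1 - winv (1 - x)) = x := by
      simp [astar, h2 (1 - x)]
    calc sinv x = sinv (astar ω.toFun (1 - winv (1 - x))) := by rw [hx]
      _ = 1 - winv (1 - x) := h3 _
  have hwshift : ∀ x : ℤ, winv (x - n) = winv x - n := by
    intro x
    apply ω.bijective.1
    rw [h2]
    have := ω.shift (winv x - n)
    have h' : winv x - (n : ℤ) + n = winv x := by ring
    rw [h'] at this
    rw [h2] at this
    omega
  intro i j hi hij hj
  have e1 : sinv ((n : ℤ) + 1 - i) = 1 - winv (i - n) := by
    rw [hsinv]; ring_nf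
  have e2 : sinv ((n : ℤ) + 1 - j) = 1 - winv (j - n) := by
    rw [hsinv]; ring_nf
  rw [e1, e2, hwshift i, hwshift j]
  ring_nf
end

section
/- Let ω be a dominant affine permutation on n letters and let p be a positive integer. Then the abacus γ(ω) = {z ∈ ℤ : ω(z) ≤ 0} is p-flush if and only if ω is p-stable, i.e., ω(i) < ω(i+p) for all i ∈ ℤ. -/
namespace AffinePerm

variable {n : ℕ} (ω : AffinePerm n)

theorem map_add_mul (x m : ℤ) : ω.toFun (x + m * n) = ω.toFun x + m * n := by
  induction m using Int.induction_on generalizing x with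
  | zero => simp
  | succ k ih =>
    rw [show x + (k + 1) * n = x + k * n + n by ring, ω.shift, ih]
    ring
  | pred k ih =>
    have h := ω.shift (x + (-k - 1) * n)
    rw [show x + (-k - 1) * n + n = x + -k * n by ring, ih] at h
    linarith

variable {ω} {winv : ℤ → ℤ}

theorem inv_add_mul (h1 : Function.LeftInverse winv ω.toFun)
    (h2 : Function.RightInverse winv ω.toFun) (c m : ℤ) :
    winv (c + m * n) = winv c + m * n := by
  conv_lhs => rw [← h2 c, ← ω.map_add_mul, h1]

theorem inv_strictMonoOn_window (h1 : Function.LeftInverse winv ω.toFun)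
    (h2 : Function.RightInverse winv ω.toFun)
    (hdom : ∀ i j : ℤ, 1 ≤ i → i < j → j ≤ (n : ℤ) → winv i < winv j)
    {m a b : ℤ} (ha : m * n < a) (hab : a < b) (hb : b ≤ (m + 1) * n) :
    winv a < winv b := by
  have key := hdom (a - m * n) (b - m * n) (by linarith) (by linarith) (by linarith)
  rwa [← add_lt_add_iff_right (m * n : ℤ), ← inv_add_mul h1 h2, ← inv_add_mul h1 h2,
    sub_add_cancel, sub_add_cancel] at key

theorem map_sub_le_mul_of_flush (p : ℤ) (hflush : ∀ z : ℤ, ω.toFun z ≤ 0 → ω.toFun (z - p) ≤ 0)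
    {m z : ℤ} (hz : ω.toFun z ≤ m * n) : ω.toFun (z - p) ≤ m * n := by
  have h := hflush (z + -m * n) (by rw [ω.map_add_mul]; linarith)
  rw [sub_eq_add_neg, add_right_comm, ← sub_eq_add_neg, ω.map_add_mul] at h
  linarith

end AffinePerm

theorem Int.exists_mul_lt_le_add_one_mul {n : ℤ} (hn : 0 < n) (c : ℤ) :
    ∃ m : ℤ, m * n < c ∧ c ≤ (m + 1) * n :=
  ⟨(c - 1) / n, by linarith [Int.ediv_mul_le (c - 1) hn.ne'],
    by linarith [Int.lt_ediv_add_one_mul_self (c - 1) hn]⟩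

/-- For a dominant affine permutation ω and a positive integer p, the abacus
γ(ω) = {z ∈ ℤ : ω(z) ≤ 0} is p-flush if and only if ω is p-stable, i.e.
ω(i) < ω(i+p) for all i ∈ ℤ. -/
theorem stmt18 (n p : ℕ) (hn : 0 < n) (hp : 0 < p) (ω : AffinePerm n)
    (winv : ℤ → ℤ)
    (h1 : Function.LeftInverse winv ω.toFun)
    (h2 : Function.RightInverse winv ω.toFun)
    (hdom : ∀ i j : ℤ, 1 ≤ i → i < j → j ≤ (n : ℤ) → winv i < winv j) :
    (∀ z : ℤ, ω.toFun z ≤ 0 → ω.toFun (z - (p : ℤ)) ≤ 0)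
      ↔ ∀ i : ℤ, ω.toFun i < ω.toFun (i + (p : ℤ)) := by
  constructor
  · intro hflush i
    by_contra! hle
    have hne : ω.toFun (i + p) ≠ ω.toFun i := fun h => by
      have := h1.injective h
      omega
    obtain ⟨m, hm, hm'⟩ := Int.exists_mul_lt_le_add_one_mul (by omega : (0 : ℤ) < n)
      (ω.toFun (i + p))
    have hi : ω.toFun i ≤ (m + 1) * n := by
      simpa using AffinePerm.map_sub_le_mul_of_flush p hflush hm'
    have := AffinePerm.inv_strictMonoOn_window h1 h2 hdom hm (lt_of_le_of_ne hle hne) hi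
    rw [h1, h1] at this
    omega
  · intro hstab z hz
    have := hstab (z - p)
    rw [sub_add_cancel] at this
    linarith
end
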